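/- arXiv:2401.03328 — 8 statements merged into one kernel-verified Lean document; each statement's English description precedes it below -/
import Mathlib

section
/- Counter-monotonic improvement under strong external randomization: Let X_1,...,X_n be nonnegative integrable random variables, X = ∑_{i=1}^n X_i, and suppose U is a uniform random variable on [0,1] independent of (X_1,...,X_n). Define Z_0 = 0, Z_i = (∑_{j≤i} X_j / X)·1_{X>0}, A_i = {Z_{i−1} ≤ U < Z_i}, and Y_i = X·1_{A_i}. Then (Y_1,...,Y_n) is a jackpot allocation of X (in particular ∑ Y_i = X a.s. and Y_i·Y_j = 0 for i ≠ j), and E[Y_i | X_1,...,X_n] = X_i almost surely for every i; consequently X_i ≤_cx Y_i for each i. -/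
/-!
Given `(X_1, …, X_n)`, the point `U` falls into `[Z_{i-1}, Z_i)`, an interval of length `X_i / X`,
with conditional probability `X_i / X`: by independence, the joint law of `((X_j)_j, U)` is a
product, and Fubini computes the probability one fibre at a time. Pulling out the
`σ(X_1, …, X_n)`-measurable factor `X` gives `E[Y_i | X_1, …, X_n] = X · X_i / X = X_i`. When
`X > 0` these intervals tile `[0, 1)`, which contains `U` almost surely, so exactly one `Y_i` equals
`X`. The convex order is then conditional Jensen.
-/

open MeasureTheory Set ProbabilityTheory

/-- The paper's `Z_k`: `(t 0 + ⋯ + t (k-1)) / ∑ j, t j`. Division by zero gives `0`, which plays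
the role of the factor `1_{X>0}`. -/
noncomputable def cumShare {n : ℕ} (t : Fin n → ℝ) (k : ℕ) : ℝ :=
  (∑ j ∈ Finset.univ.filter (fun j : Fin n => (j : ℕ) < k), t j) / ∑ j, t j

section cumShare

variable {n : ℕ} {t : Fin n → ℝ}

@[simp] lemma cumShare_zero : cumShare t 0 = 0 := by simp [cumShare]

lemma cumShare_nonneg (ht : 0 ≤ t) (k : ℕ) : 0 ≤ cumShare t k :=
  div_nonneg (Finset.sum_nonneg fun j _ => ht j) (Finset.sum_nonneg fun j _ => ht j)

lemma cumShare_le_one (ht : 0 ≤ t) (k : ℕ) : cumShare t k ≤ 1 :=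
  div_le_one_of_le₀ (Finset.sum_le_sum_of_subset_of_nonneg (Finset.filter_subset _ _)
    fun j _ _ => ht j) (Finset.sum_nonneg fun j _ => ht j)

lemma monotone_cumShare (ht : 0 ≤ t) : Monotone (cumShare t) := fun _ _ hkl =>
  div_le_div_of_nonneg_right (Finset.sum_le_sum_of_subset_of_nonneg
    (Finset.monotone_filter_right _ fun _ _ hj => lt_of_lt_of_le hj hkl)
    fun j _ _ => ht j) (Finset.sum_nonneg fun j _ => ht j)

lemma cumShare_self (h : ∑ j, t j ≠ 0) : cumShare t n = 1 := by
  simp [cumShare, h]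

lemma cumShare_succ_sub (i : Fin n) : cumShare t (i + 1) - cumShare t i = t i / ∑ j, t j := by
  have : Finset.univ.filter (fun j : Fin n => (j : ℕ) < i + 1)
      = insert i (Finset.univ.filter (fun j : Fin n => (j : ℕ) < i)) := by
    ext j; simp only [Finset.mem_filter, Finset.mem_univ, true_and, Finset.mem_insert]; omega
  rw [cumShare, cumShare, ← sub_div, this, Finset.sum_insert (by simp), add_sub_cancel_right]

lemma sum_mul_cumShare_succ_sub (ht : 0 ≤ t) (i : Fin n) :
    (∑ j, t j) * (cumShare t (i + 1) - cumShare t i) = t i := by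
  rw [cumShare_succ_sub]
  rcases eq_or_ne (∑ j, t j) 0 with h | h
  · rw [h, zero_mul, eq_comm]
    exact (Finset.sum_eq_zero_iff_of_nonneg fun j _ => ht j).1 h i (Finset.mem_univ i)
  · exact mul_div_cancel₀ _ h

lemma measurable_cumShare (k : ℕ) : Measurable fun t : Fin n → ℝ => cumShare t k := by
  unfold cumShare; fun_prop

end cumShare

lemma measureReal_restrict_Icc_zero_one_Ico {a b : ℝ} (ha : 0 ≤ a) (hab : a ≤ b)
    (hb : b ≤ 1) :
    (volume.restrict (Icc (0 : ℝ) 1)).real (Ico a b) = b - a := by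
  rw [measureReal_restrict_apply measurableSet_Ico,
    inter_eq_left.2 ((Ico_subset_Ico ha hb).trans Ico_subset_Icc_self),
    Real.volume_real_Ico_of_le hab]

lemma ae_mem_Ico_zero_one_of_map_eq {Ω : Type*} [MeasurableSpace Ω] {P : Measure Ω}
    {U : Ω → ℝ} (hU : AEMeasurable U P) (hUlaw : P.map U = volume.restrict (Icc 0 1)) :
    ∀ᵐ ω ∂P, U ω ∈ Ico 0 1 := by
  refine ae_of_ae_map hU ?_
  rw [hUlaw, Measure.restrict_congr_set Ico_ae_eq_Icc.symm]
  exact ae_restrict_mem measurableSet_Ico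

section

variable {Ω β γ : Type*} [MeasurableSpace Ω] [mβ : MeasurableSpace β] [MeasurableSpace γ]
  {P : Measure Ω} {T : Ω → β}

lemma ProbabilityTheory.IndepFun.integral_comp_prodMk [IsFiniteMeasure P] {U : Ω → γ}
    (hTU : IndepFun T U P) (hT : Measurable T)
    (hU : Measurable U) {f : β × γ → ℝ} (hf : Integrable f ((P.map T).prod (P.map U))) :
    ∫ ω, f (T ω, U ω) ∂P = ∫ t, ∫ u, f (t, u) ∂(P.map U) ∂(P.map T) := by
  have hmap := (indepFun_iff_map_prod_eq_prod_map_map hT.aemeasurable hU.aemeasurable).1 hTU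
  rw [← integral_prod f hf, ← hmap,
    integral_map (hT.prodMk hU).aemeasurable (hmap ▸ hf.aestronglyMeasurable)]

lemma ProbabilityTheory.IndepFun.setIntegral_indicator_Ico [IsProbabilityMeasure P]
    {U : Ω → ℝ} (hTU : IndepFun T U P) (hT : Measurable T) (hU : Measurable U)
    (hUlaw : P.map U = volume.restrict (Icc 0 1)) {g h : β → ℝ} (hg : Measurable g)
    (hh : Measurable h) (hg0 : ∀ ω, 0 ≤ g (T ω)) (hgh : ∀ ω, g (T ω) ≤ h (T ω))
    (hh1 : ∀ ω, h (T ω) ≤ 1) {B : Set β} (hB : MeasurableSet B) :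
    ∫ ω in T ⁻¹' B, {ω | U ω ∈ Ico (g (T ω)) (h (T ω))}.indicator 1 ω ∂P
      = ∫ ω in T ⁻¹' B, h (T ω) - g (T ω) ∂P := by
  set f : β × ℝ → ℝ := fun p => B.indicator 1 p.1 * (Ico (g p.1) (h p.1)).indicator 1 p.2
  have hf : Measurable f :=
    (measurable_one.indicator hB).comp measurable_fst |>.mul <|
      measurable_one.indicator ((measurableSet_le (hg.comp measurable_fst) measurable_snd).inter
        (measurableSet_lt measurable_snd (hh.comp measurable_fst)))
  have hfi : Integrable f ((P.map T).prod (P.map U)) := by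
    refine Integrable.of_bound hf.aestronglyMeasurable 1 (ae_of_all _ fun p => ?_)
    simp only [f, Set.indicator, Pi.one_apply]
    split_ifs <;> norm_num
  have hinner : ∀ᵐ t ∂(P.map T), ∫ u, f (t, u) ∂(P.map U) = B.indicator 1 t * (h t - g t) := by
    have hbounds : MeasurableSet {t | 0 ≤ g t ∧ g t ≤ h t ∧ h t ≤ 1} := by measurability
    filter_upwards [(ae_map_iff hT.aemeasurable hbounds).2
      (ae_of_all _ fun ω => ⟨hg0 ω, hgh ω, hh1 ω⟩)] with t ⟨ht0, hth, ht1⟩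
    simp only [f]
    rw [integral_const_mul, integral_indicator_one measurableSet_Ico, hUlaw,
      measureReal_restrict_Icc_zero_one_Ico ht0 hth ht1]
  calc ∫ ω in T ⁻¹' B, {ω | U ω ∈ Ico (g (T ω)) (h (T ω))}.indicator 1 ω ∂P
      = ∫ ω, f (T ω, U ω) ∂P := by
        rw [← integral_indicator (hT hB)]
        congr 1 with ω
        by_cases hω : T ω ∈ B <;> simp [f, hω, Set.indicator_apply]
    _ = ∫ t, B.indicator 1 t * (h t - g t) ∂(P.map T) := by
        rw [hTU.integral_comp_prodMk hT hU hfi, integral_congr_ae hinner]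
    _ = ∫ ω in T ⁻¹' B, h (T ω) - g (T ω) ∂P := by
        rw [integral_map hT.aemeasurable (by fun_prop), ← integral_indicator (hT hB)]
        congr 1 with ω
        by_cases hω : T ω ∈ B <;> simp [hω]

lemma ProbabilityTheory.IndepFun.condExp_indicator_Ico [IsProbabilityMeasure P] {U : Ω → ℝ}
    (hTU : IndepFun T U P) (hT : Measurable T) (hU : Measurable U)
    (hUlaw : P.map U = volume.restrict (Icc 0 1)) {g h : β → ℝ} (hg : Measurable g)
    (hh : Measurable h) (hg0 : ∀ ω, 0 ≤ g (T ω)) (hgh : ∀ ω, g (T ω) ≤ h (T ω))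
    (hh1 : ∀ ω, h (T ω) ≤ 1) :
    P[{ω | U ω ∈ Ico (g (T ω)) (h (T ω))}.indicator 1 | MeasurableSpace.comap T mβ]
      =ᵐ[P] fun ω => h (T ω) - g (T ω) := by
  have hE : MeasurableSet {ω | U ω ∈ Ico (g (T ω)) (h (T ω))} :=
    (measurableSet_le (hg.comp hT) hU).inter (measurableSet_lt hU (hh.comp hT))
  have hdiff : Measurable fun ω => h (T ω) - g (T ω) := (hh.comp hT).sub (hg.comp hT)
  refine (ae_eq_condExp_of_forall_setIntegral_eq hT.comap_le
    ((integrable_const 1).indicator hE) (fun s _ _ => ?_) ?_ ?_).symm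
  · refine (Integrable.of_bound hdiff.aestronglyMeasurable 1
      (ae_of_all _ fun ω => ?_)).integrableOn
    rw [Real.norm_eq_abs, abs_le]
    constructor <;> linarith [hg0 ω, hgh ω, hh1 ω]
  · rintro _ ⟨B, hB, rfl⟩ _
    exact (hTU.setIntegral_indicator_Ico hT hU hUlaw hg hh hg0 hgh hh1 hB).symm
  · exact ((hh.comp (comap_measurable T)).sub (hg.comp (comap_measurable T))).aestronglyMeasurable
end

lemma ConvexOn.integral_comp_le_of_condExp_ae_eq {Ω : Type*} {m mΩ : MeasurableSpace Ω}
    {μ : Measure Ω} (hm : m ≤ mΩ) [SigmaFinite (μ.trim hm)] {φ : ℝ → ℝ}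
    (hφ : ConvexOn ℝ univ φ) {X Y : Ω → ℝ} (hXY : μ[Y | m] =ᵐ[μ] X) (hY : Integrable Y μ)
    (hφX : Integrable (fun ω => φ (X ω)) μ) (hφY : Integrable (fun ω => φ (Y ω)) μ) :
    ∫ ω, φ (X ω) ∂μ ≤ ∫ ω, φ (Y ω) ∂μ := by
  have hφc : LowerSemicontinuous φ :=
    (continuousOn_univ.1 (hφ.continuousOn isOpen_univ)).lowerSemicontinuous
  have hXY' : (fun ω => φ (X ω)) =ᵐ[μ] φ ∘ μ[Y | m] := by
    filter_upwards [hXY] with ω hω using by rw [Function.comp_apply, hω]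
  calc ∫ ω, φ (X ω) ∂μ = ∫ ω, (φ ∘ μ[Y | m]) ω ∂μ := integral_congr_ae hXY'
    _ ≤ ∫ ω, μ[φ ∘ Y | m] ω ∂μ :=
      integral_mono_ae (hφX.congr hXY') integrable_condExp
        (hφ.map_condExp_le_univ hm hφc hY hφY)
    _ = ∫ ω, φ (Y ω) ∂μ := integral_condExp hm

lemma MeasureTheory.Integrable.mul_indicator_one {Ω : Type*} [MeasurableSpace Ω]
    {μ : Measure Ω} {f : Ω → ℝ} (hf : Integrable f μ) {s : Set Ω} (hs : MeasurableSet s) :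
    Integrable (fun ω => f ω * s.indicator 1 ω) μ :=
  (hf.indicator hs).congr (ae_of_all _ fun ω => by by_cases hω : ω ∈ s <;> simp [hω])

section Jackpot

variable {Ω : Type*} {n : ℕ} (Xv : Fin n → Ω → ℝ) (U : Ω → ℝ)

/-- The paper's `A_{i+1} = {Z_i ≤ U < Z_{i+1}}`: `Fin n` counts from `0`. -/
def jackpotEvent (i : Fin n) : Set Ω :=
  {ω | U ω ∈ Ico (cumShare (fun j => Xv j ω) i) (cumShare (fun j => Xv j ω) (i + 1))}

variable {Xv U}

lemma measurableSet_jackpotEvent [MeasurableSpace Ω] (hXv : ∀ i, Measurable (Xv i))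
    (hU : Measurable U) (i : Fin n) :
    MeasurableSet (jackpotEvent Xv U i) := by
  have hT : Measurable fun ω (j : Fin n) => Xv j ω := measurable_pi_lambda _ hXv
  exact (measurableSet_le ((measurable_cumShare _).comp hT) hU).inter
    (measurableSet_lt hU ((measurable_cumShare _).comp hT))

open Function in
lemma pairwise_disjoint_jackpotEvent (hpos : ∀ i ω, 0 ≤ Xv i ω) :
    Pairwise (Disjoint on jackpotEvent Xv U) := by
  intro i j hij
  refine Set.disjoint_left.2 fun ω hi hj => ?_
  have hmono := monotone_cumShare (t := fun j => Xv j ω) fun j => hpos j ω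
  exact Set.disjoint_left.1 (hmono.pairwise_disjoint_on_Ico_succ (Fin.val_ne_of_ne hij)) hi hj

lemma exists_mem_jackpotEvent {ω : Ω} (hX : ∑ j, Xv j ω ≠ 0)
    (hU : U ω ∈ Ico 0 1) : ∃ i, ω ∈ jackpotEvent Xv U i := by
  have := Ico_subset_biUnion_Ico n (cumShare fun j => Xv j ω)
  rw [cumShare_zero, cumShare_self hX] at this
  obtain ⟨i, hi, hUi⟩ := mem_iUnion₂.1 (this hU)
  exact ⟨⟨i, Finset.mem_range.1 hi⟩, hUi⟩

lemma sum_mul_indicator_jackpotEvent (hpos : ∀ i ω, 0 ≤ Xv i ω) {ω : Ω} (hU : U ω ∈ Ico 0 1) :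
    ∑ i, (∑ j, Xv j ω) * (jackpotEvent Xv U i).indicator 1 ω = ∑ j, Xv j ω := by
  rcases eq_or_ne (∑ j, Xv j ω) 0 with hX | hX
  · simp [hX]
  obtain ⟨i, hi⟩ := exists_mem_jackpotEvent hX hU
  have hj : ∀ j, j ≠ i → ω ∉ jackpotEvent Xv U j := fun j hji =>
    Set.disjoint_left.1 (pairwise_disjoint_jackpotEvent hpos hji.symm) hi
  rw [Finset.sum_eq_single i (fun j _ hji => by rw [indicator_of_notMem (hj j hji), mul_zero])
    (by simp), indicator_of_mem hi, Pi.one_apply, mul_one]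

lemma condExp_mul_indicator_jackpotEvent [MeasurableSpace Ω] {P : Measure Ω}
    [IsProbabilityMeasure P] (hXv : ∀ i, Measurable (Xv i)) (hint : ∀ i, Integrable (Xv i) P)
    (hpos : ∀ i ω, 0 ≤ Xv i ω) (hU : Measurable U)
    (hUlaw : P.map U = volume.restrict (Icc 0 1))
    (hUindep : IndepFun U (fun ω (j : Fin n) => Xv j ω) P) (i : Fin n) :
    P[fun ω => (∑ j, Xv j ω) * (jackpotEvent Xv U i).indicator 1 ω
        | MeasurableSpace.comap (fun ω (j : Fin n) => Xv j ω) MeasurableSpace.pi] =ᵐ[P] Xv i := by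
  set T : Ω → Fin n → ℝ := fun ω j => Xv j ω
  have hT : Measurable T := measurable_pi_lambda _ hXv
  have hXm : StronglyMeasurable[MeasurableSpace.comap T MeasurableSpace.pi]
      fun ω => ∑ j, Xv j ω :=
    ((Finset.measurable_sum _ fun j _ => measurable_pi_apply j).comp
      (comap_measurable T)).stronglyMeasurable
  have hA := measurableSet_jackpotEvent hXv hU i
  have hAint : Integrable ((jackpotEvent Xv U i).indicator (1 : Ω → ℝ)) P :=
    (integrable_const 1).indicator hA
  have hYint := (integrable_finsetSum Finset.univ fun j _ => hint j).mul_indicator_one hA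
  have hcond : P[(jackpotEvent Xv U i).indicator 1 | MeasurableSpace.comap T MeasurableSpace.pi]
      =ᵐ[P] fun ω => cumShare (T ω) (i + 1) - cumShare (T ω) i :=
    hUindep.symm.condExp_indicator_Ico hT hU hUlaw (measurable_cumShare _)
      (measurable_cumShare _) (fun ω => cumShare_nonneg (fun j => hpos j ω) _)
      (fun ω => monotone_cumShare (fun j => hpos j ω) (Nat.le_succ _))
      (fun ω => cumShare_le_one (fun j => hpos j ω) _)
  filter_upwards [condExp_mul_of_stronglyMeasurable_left hXm hYint hAint, hcond] with ω h1 h2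
  rw [← sum_mul_cumShare_succ_sub (fun j => hpos j ω) i, ← h2]
  exact h1

end Jackpot

/-- Counter-monotonic improvement under strong external randomization: the explicit
construction `Y_i = X·1_{A_i}`, with `A_i = {Z_{i-1} ≤ U < Z_i}` built from a uniform `U`
independent of `(X_1,...,X_n)`, is a jackpot allocation of `X = ∑ X_i` satisfying
`E[Y_i | X_1,...,X_n] = X_i` a.s.; consequently `X_i ≤_cx Y_i`. -/
theorem stmt2 {Ω : Type*} [MeasurableSpace Ω] (P : Measure Ω) [IsProbabilityMeasure P]
    {n : ℕ} (Xv : Fin n → Ω → ℝ) (hmeas : ∀ i, Measurable (Xv i))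
    (hint : ∀ i, Integrable (Xv i) P) (hpos : ∀ i ω, 0 ≤ Xv i ω)
    (X : Ω → ℝ) (hX : ∀ ω, X ω = ∑ i, Xv i ω)
    (U : Ω → ℝ) (hUm : Measurable U)
    (hUlaw : P.map U = (volume : Measure ℝ).restrict (Icc 0 1))
    (hUindep : IndepFun U (fun ω (i : Fin n) => Xv i ω) P)
    (Z : ℕ → Ω → ℝ)
    (hZ : ∀ k ω, Z k ω =
      (∑ j ∈ Finset.univ.filter (fun j : Fin n => (j : ℕ) < k), Xv j ω) / X ω)
    (A : Fin n → Set Ω)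
    (hA : ∀ i, A i = {ω | Z (i : ℕ) ω ≤ U ω ∧ U ω < Z ((i : ℕ) + 1) ω})
    (Y : Fin n → Ω → ℝ)
    (hY : ∀ i ω, Y i ω = X ω * (A i).indicator 1 ω) :
    (∀ᵐ ω ∂P, ∑ i, Y i ω = X ω) ∧
    (∀ i j, i ≠ j → ∀ ω, Y i ω * Y j ω = 0) ∧
    (∀ i, P[Y i | MeasurableSpace.comap (fun ω (j : Fin n) => Xv j ω) MeasurableSpace.pi]
        =ᵐ[P] Xv i) ∧
    (∀ i (φ : ℝ → ℝ), ConvexOn ℝ univ φ →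
      Integrable (fun ω => φ (Xv i ω)) P → Integrable (fun ω => φ (Y i ω)) P →
      ∫ ω, φ (Xv i ω) ∂P ≤ ∫ ω, φ (Y i ω) ∂P) := by
  have hAeq : A = jackpotEvent Xv U := by
    funext i
    simp only [hA i, jackpotEvent, hZ, hX, cumShare, mem_Ico]
  have hYeq : Y = fun i ω => (∑ j, Xv j ω) * (jackpotEvent Xv U i).indicator 1 ω := by
    funext i ω
    rw [hY, hX, hAeq]
  subst hAeq hYeq
  have hcond := condExp_mul_indicator_jackpotEvent hmeas hint hpos hUm hUlaw hUindep
  refine ⟨?_, fun i j hij ω => ?_, hcond, fun i φ hφ hφX hφY => ?_⟩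
  · filter_upwards [ae_mem_Ico_zero_one_of_map_eq hUm.aemeasurable hUlaw] with ω hω
    rw [hX]
    exact sum_mul_indicator_jackpotEvent hpos hω
  · dsimp only
    by_cases hi : ω ∈ jackpotEvent Xv U i
    · rw [indicator_of_notMem (disjoint_left.1 (pairwise_disjoint_jackpotEvent hpos hij) hi),
        mul_zero, mul_zero]
    · rw [indicator_of_notMem hi, mul_zero, zero_mul]
  · exact hφ.integral_comp_le_of_condExp_ae_eq (measurable_pi_lambda _ hmeas).comap_le (hcond i)
      ((integrable_finsetSum _ fun j _ => hint j).mul_indicator_one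
        (measurableSet_jackpotEvent hmeas hUm i)) hφX hφY
end

section
/- If X_1,...,X_n are integrable random variables all bounded below (respectively, all bounded above), X = ∑ X_i, and there exists a uniform random variable independent of (X_1,...,X_n), then there exists a counter-monotonic allocation (Y_1,...,Y_n) with ∑ Y_i = X and X_i ≤_cx Y_i for every i. (Proof via shifting: choose constants m_i with X_i + m_i ≥ 0, apply the counter-monotonic improvement theorem to the shifted variables, and shift back, using invariance of convex order under constant shifts.) -/
/-!
Shifting, and in the bounded-above case also reflecting, makes the variables nonnegative, and an
improvement transforms back because `t ↦ a * t + c` preserves convexity and counter-monotonicity.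
For nonnegative `X`, the independent uniform `U` runs a lottery: `[0, 1)` is cut into consecutive
intervals of lengths `X i / ∑ X`, and the agent whose interval contains `U` receives all of `∑ X`.
At most one share is nonzero at each point, so the allocation is counter-monotonic; conditionally
on `X`, the share `Y i` equals `∑ X` with probability `X i / ∑ X` and `0` otherwise, so Jensen's
inequality gives `φ (X i) ≤ E[φ (Y i) | X]`.
-/

open MeasureTheory Set ProbabilityTheory Function

namespace Fin

variable {n : ℕ}

theorem exists_castSucc_le_and_lt_succ {α : Type*} [LinearOrder α] {f : Fin (n + 1) → α} {t : α}
    (h0 : f 0 ≤ t) (hlast : t < f (last n)) : ∃ i : Fin n, f i.castSucc ≤ t ∧ t < f i.succ := by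
  induction n with
  | zero => exact absurd (h0.trans_lt hlast) (lt_irrefl _)
  | succ n ih =>
    by_cases h : t < f (last n).castSucc
    · obtain ⟨i, hi⟩ := ih (f := f ∘ castSucc) h0 h
      exact ⟨i.castSucc, hi⟩
    · exact ⟨last n, not_lt.1 h, hlast⟩

theorem partialSum_last {M : Type*} [AddCommMonoid M] (f : Fin n → M) :
    partialSum f (last n) = ∑ i, f i := by
  simp [partialSum, List.take_of_length_le, List.sum_ofFn]

theorem monotone_partialSum {M : Type*} [AddCommMonoid M] [PartialOrder M] [IsOrderedAddMonoid M]
    {f : Fin n → M} (hf : 0 ≤ f) : Monotone (partialSum f) :=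
  monotone_iff_le_succ.2 fun i => by
    rw [partialSum_succ]
    exact le_add_of_nonneg_right (hf i)

theorem measurable_partialSum {M : Type*} [AddCommMonoid M] [MeasurableSpace M]
    [MeasurableAdd₂ M] (k : Fin (n + 1)) : Measurable fun f : Fin n → M => partialSum f k := by
  induction k using Fin.induction with
  | zero => simp only [partialSum_zero, measurable_const]
  | succ i hi =>
    simp only [partialSum_succ]
    exact hi.add (measurable_pi_apply i)

end Fin

theorem Monotone.pairwise_disjoint_on_Ico_castSucc_succ {n : ℕ} {α : Type*} [Preorder α]
    {f : Fin (n + 1) → α} (hf : Monotone f) :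
    Pairwise (Disjoint on fun i : Fin n => Ico (f i.castSucc) (f i.succ)) :=
  (pairwise_disjoint_on _).2 fun _ _ hij =>
    disjoint_iff_inf_le.mpr fun _ ⟨⟨_, h₁⟩, ⟨h₂, _⟩⟩ =>
      h₁.not_ge <| (hf <| Fin.succ_le_castSucc_iff.2 hij).trans h₂

theorem ConvexOn.comp_mul_add {φ : ℝ → ℝ} (hφ : ConvexOn ℝ univ φ) (a c : ℝ) :
    ConvexOn ℝ univ fun t => φ (a * t + c) :=
  (hφ.comp_affineMap (AffineMap.lineMap c (a + c))).congr fun t _ => by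
    simp [AffineMap.lineMap_apply_ring', mul_comm]

theorem sub_mul_sub_nonpos_of_mul_eq_zero {a b a' b' : ℝ} (ha : 0 ≤ a) (hb : 0 ≤ b)
    (ha' : 0 ≤ a') (hb' : 0 ≤ b') (h : a * b = 0) (h' : a' * b' = 0) :
    (a - a') * (b - b') ≤ 0 := by
  nlinarith [mul_nonneg ha hb', mul_nonneg ha' hb]

namespace MeasureTheory

instance : IsProbabilityMeasure ((volume : Measure ℝ).restrict (Icc 0 1)) := ⟨by simp⟩

variable {α : Type*} [MeasurableSpace α] {μ : Measure α} [IsProbabilityMeasure μ] {s : Set α}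

theorem integral_comp_indicator_const (hs : MeasurableSet s) (φ : ℝ → ℝ) (c : ℝ) :
    ∫ u, φ (s.indicator (fun _ => c) u) ∂μ = μ.real s * φ c + (1 - μ.real s) * φ 0 := by
  have hφ : (fun u => φ (s.indicator (fun _ => c) u)) =
      s.indicator (fun _ => φ c) + sᶜ.indicator (fun _ => φ 0) := by
    ext u
    by_cases hu : u ∈ s <;> simp [hu]
  rw [hφ, integral_add' ((integrable_const _).indicator hs)
    ((integrable_const _).indicator hs.compl), integral_indicator_const _ hs,
    integral_indicator_const _ hs.compl,
    probReal_compl_eq_one_sub hs, smul_eq_mul, smul_eq_mul]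

theorem _root_.ConvexOn.le_integral_comp_indicator_const (hs : MeasurableSet s) {φ : ℝ → ℝ}
    (hφ : ConvexOn ℝ univ φ) (c : ℝ) :
    φ (μ.real s * c) ≤ ∫ u, φ (s.indicator (fun _ => c) u) ∂μ := by
  rw [integral_comp_indicator_const hs]
  simpa using hφ.2 (mem_univ c) (mem_univ 0) measureReal_nonneg
    (sub_nonneg.2 measureReal_le_one) (add_sub_cancel _ _)

end MeasureTheory

noncomputable section Jackpot

variable {n : ℕ}

def cumulativeShare (x : Fin n → ℝ) (k : Fin (n + 1)) : ℝ :=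
  Fin.partialSum x k / ∑ j, x j

/-- When `∑ x = 0` all shares vanish and every interval is empty. -/
def jackpot (x : Fin n → ℝ) (i : Fin n) (u : ℝ) : ℝ :=
  (Ico (cumulativeShare x i.castSucc) (cumulativeShare x i.succ)).indicator (fun _ => ∑ j, x j) u

variable {x : Fin n → ℝ}

theorem monotone_cumulativeShare (hx : 0 ≤ x) : Monotone (cumulativeShare x) :=
  (Fin.monotone_partialSum hx).div_const (Fintype.sum_nonneg hx)

theorem cumulativeShare_zero : cumulativeShare x 0 = 0 := by
  simp [cumulativeShare]

theorem cumulativeShare_last_le_one : cumulativeShare x (Fin.last n) ≤ 1 := by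
  rw [cumulativeShare, Fin.partialSum_last]
  exact div_self_le_one _

theorem cumulativeShare_last (hx : ∑ j, x j ≠ 0) : cumulativeShare x (Fin.last n) = 1 := by
  rw [cumulativeShare, Fin.partialSum_last, div_self hx]

theorem cumulativeShare_succ_sub_castSucc (i : Fin n) :
    cumulativeShare x i.succ - cumulativeShare x i.castSucc = x i / ∑ j, x j := by
  simp only [cumulativeShare, Fin.partialSum_succ, add_div, add_sub_cancel_left]

theorem measurable_jackpot (i : Fin n) :
    Measurable fun p : ℝ × (Fin n → ℝ) => jackpot p.2 i p.1 := by
  have hsum : Measurable fun x : Fin n → ℝ => ∑ j, x j :=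
    Finset.measurable_sum _ fun j _ => measurable_pi_apply j
  have hshare : ∀ k, Measurable fun p : ℝ × (Fin n → ℝ) => cumulativeShare p.2 k := fun k =>
    ((Fin.measurable_partialSum k).div hsum).comp measurable_snd
  have hset : MeasurableSet {p : ℝ × (Fin n → ℝ) |
      p.1 ∈ Ico (cumulativeShare p.2 i.castSucc) (cumulativeShare p.2 i.succ)} :=
    (measurableSet_le (hshare _) measurable_fst).inter (measurableSet_lt measurable_fst (hshare _))
  exact Measurable.ite hset (hsum.comp measurable_snd) measurable_const

theorem jackpot_nonneg (hx : 0 ≤ x) (i : Fin n) (u : ℝ) : 0 ≤ jackpot x i u :=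
  indicator_nonneg (fun _ _ => Fintype.sum_nonneg hx) u

theorem jackpot_mul_jackpot_of_ne (hx : 0 ≤ x) {i j : Fin n} (hij : i ≠ j) (u : ℝ) :
    jackpot x i u * jackpot x j u = 0 := by
  simp only [jackpot]
  by_cases hu : u ∈ Ico (cumulativeShare x i.castSucc) (cumulativeShare x i.succ)
  · rw [indicator_of_notMem (((monotone_cumulativeShare hx).pairwise_disjoint_on_Ico_castSucc_succ
      hij).notMem_of_mem_left hu), mul_zero]
  · rw [indicator_of_notMem hu, zero_mul]

theorem sum_jackpot (hx : 0 ≤ x) {u : ℝ} (hu : u ∈ Ico (0 : ℝ) 1) :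
    ∑ i, jackpot x i u = ∑ i, x i := by
  rcases (Fintype.sum_nonneg hx).eq_or_lt with hS | hS
  · simp [jackpot, ← hS]
  obtain ⟨i, hi⟩ := Fin.exists_castSucc_le_and_lt_succ (f := cumulativeShare x)
    (cumulativeShare_zero.trans_le hu.1) (hu.2.trans_eq (cumulativeShare_last hS.ne').symm)
  have hdisj := (monotone_cumulativeShare hx).pairwise_disjoint_on_Ico_castSucc_succ
  rw [Finset.sum_eq_single (f := fun j => jackpot x j u) i
    (fun j _ hji => indicator_of_notMem ((hdisj hji.symm).notMem_of_mem_left hi) _) (by simp)]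
  exact indicator_of_mem hi fun _ => ∑ j, x j

theorem le_integral_comp_jackpot (hx : 0 ≤ x) {φ : ℝ → ℝ} (hφ : ConvexOn ℝ univ φ) (i : Fin n) :
    φ (x i) ≤ ∫ u, φ (jackpot x i u) ∂(volume.restrict (Icc 0 1)) := by
  have hmono := monotone_cumulativeShare hx
  have hshare : (volume.restrict (Icc (0 : ℝ) 1)).real
      (Ico (cumulativeShare x i.castSucc) (cumulativeShare x i.succ)) = x i / ∑ j, x j := by
    rw [measureReal_restrict_apply measurableSet_Ico, inter_eq_left.2, Real.volume_real_Ico_of_le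
      (hmono (Fin.castSucc_le_succ i)), cumulativeShare_succ_sub_castSucc]
    exact Ico_subset_Icc_self.trans (Icc_subset_Icc
      (cumulativeShare_zero.symm.trans_le (hmono (Fin.zero_le _)))
      ((hmono (Fin.le_last _)).trans cumulativeShare_last_le_one))
  have hxi : x i / (∑ j, x j) * ∑ j, x j = x i := div_mul_cancel_of_imp fun hS =>
    le_antisymm ((Finset.single_le_sum (fun j _ => hx j) (Finset.mem_univ i)).trans hS.le) (hx i)
  calc φ (x i) = φ (x i / (∑ j, x j) * ∑ j, x j) := by rw [hxi]
    _ ≤ _ := by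
      rw [← hshare]
      exact hφ.le_integral_comp_indicator_const measurableSet_Ico _

end Jackpot

theorem ProbabilityTheory.IndepFun.integral_le_integral_comp {Ω α β : Type*} [MeasurableSpace Ω]
    [MeasurableSpace α] [MeasurableSpace β] {P : Measure Ω} [IsProbabilityMeasure P]
    {U : Ω → α} {V : Ω → β} (hUV : IndepFun U V P) (hU : Measurable U) (hV : Measurable V)
    {g : α × β → ℝ} (hg : Measurable g) (hgi : Integrable (fun ω => g (U ω, V ω)) P)
    {F : Ω → ℝ} (hF : Integrable F P) (hle : ∀ᵐ ω ∂P, F ω ≤ ∫ u, g (u, V ω) ∂(P.map U)) :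
    ∫ ω, F ω ∂P ≤ ∫ ω, g (U ω, V ω) ∂P := by
  have hUV' : Measurable fun ω => (U ω, V ω) := hU.prodMk hV
  have hlaw : P.map (fun ω => (U ω, V ω)) = (P.map U).prod (P.map V) :=
    (indepFun_iff_map_prod_eq_prod_map_map hU.aemeasurable hV.aemeasurable).1 hUV
  have hgi' : Integrable g ((P.map U).prod (P.map V)) := by
    rw [← hlaw]
    exact (integrable_map_measure hg.aestronglyMeasurable hUV'.aemeasurable).2 hgi
  have hinner := hgi'.integral_prod_right
  calc ∫ ω, F ω ∂P ≤ ∫ ω, ∫ u, g (u, V ω) ∂(P.map U) ∂P :=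
        integral_mono_ae hF ((integrable_map_measure hinner.1 hV.aemeasurable).1 hinner) hle
    _ = ∫ p, g p ∂((P.map U).prod (P.map V)) := by
        rw [integral_prod_symm g hgi', integral_map hV.aemeasurable hinner.1]
    _ = ∫ ω, g (U ω, V ω) ∂P := by
        rw [← hlaw, integral_map hUV'.aemeasurable hg.aestronglyMeasurable]

def IsCounterMonotonicImprovement {Ω ι : Type*} [MeasurableSpace Ω] [Fintype ι] (P : Measure Ω)
    (X Y : ι → Ω → ℝ) : Prop :=
  (∀ i, AEMeasurable (Y i) P) ∧
    (∀ i j, i ≠ j → ∀ᵐ p ∂(P.prod P), (Y i p.1 - Y i p.2) * (Y j p.1 - Y j p.2) ≤ 0) ∧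
    (∀ᵐ ω ∂P, ∑ i, Y i ω = ∑ i, X i ω) ∧
    (∀ i (φ : ℝ → ℝ), ConvexOn ℝ univ φ →
      Integrable (fun ω => φ (X i ω)) P → Integrable (fun ω => φ (Y i ω)) P →
      ∫ ω, φ (X i ω) ∂P ≤ ∫ ω, φ (Y i ω) ∂P)

theorem IsCounterMonotonicImprovement.mul_add {Ω ι : Type*} [MeasurableSpace Ω] [Fintype ι]
    {P : Measure Ω} {X Y : ι → Ω → ℝ} (h : IsCounterMonotonicImprovement P X Y) (a c : ℝ) :
    IsCounterMonotonicImprovement P (fun i ω => a * X i ω + c) (fun i ω => a * Y i ω + c) := by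
  obtain ⟨hmeas, hcounter, hsum, hcx⟩ := h
  refine ⟨fun i => ((hmeas i).const_mul a).add_const c, fun i j hij => ?_, ?_,
    fun i φ hφ => hcx i _ (hφ.comp_mul_add a c)⟩
  · filter_upwards [hcounter i j hij] with p hp
    calc (a * Y i p.1 + c - (a * Y i p.2 + c)) * (a * Y j p.1 + c - (a * Y j p.2 + c))
        = a ^ 2 * ((Y i p.1 - Y i p.2) * (Y j p.1 - Y j p.2)) := by ring
      _ ≤ 0 := mul_nonpos_of_nonneg_of_nonpos (sq_nonneg a) hp
  · filter_upwards [hsum] with ω hω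
    simp only [Finset.sum_add_distrib, ← Finset.mul_sum, hω]

theorem exists_isCounterMonotonicImprovement_of_nonneg {Ω : Type*} [MeasurableSpace Ω]
    (P : Measure Ω) [IsProbabilityMeasure P] {n : ℕ} (X : Fin n → Ω → ℝ)
    (hX : ∀ i, Measurable (X i)) (hX0 : ∀ i ω, 0 ≤ X i ω) (U : Ω → ℝ) (hU : Measurable U)
    (hUlaw : P.map U = (volume : Measure ℝ).restrict (Icc 0 1))
    (hUX : IndepFun U (fun ω i => X i ω) P) :
    ∃ Y, IsCounterMonotonicImprovement P X Y := by
  have hXv : Measurable fun ω i => X i ω := measurable_pi_lambda _ hX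
  have hjackpot i : Measurable fun ω => jackpot (fun j => X j ω) i (U ω) :=
    (measurable_jackpot i).comp (hU.prodMk hXv)
  have hU01 : ∀ᵐ ω ∂P, U ω ∈ Ico (0 : ℝ) 1 := by
    refine (ae_map_iff hU.aemeasurable measurableSet_Ico).1 ?_
    rw [hUlaw, ← Measure.restrict_congr_set Ico_ae_eq_Icc]
    exact ae_restrict_mem measurableSet_Ico
  refine ⟨fun i ω => jackpot (fun j => X j ω) i (U ω), fun i => (hjackpot i).aemeasurable,
    fun i j hij => ae_of_all _ fun p => ?_, ?_, fun i φ hφ hXi hYi => ?_⟩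
  · exact sub_mul_sub_nonpos_of_mul_eq_zero (jackpot_nonneg (hX0 · _) _ _)
      (jackpot_nonneg (hX0 · _) _ _) (jackpot_nonneg (hX0 · _) _ _) (jackpot_nonneg (hX0 · _) _ _)
      (jackpot_mul_jackpot_of_ne (hX0 · _) hij _) (jackpot_mul_jackpot_of_ne (hX0 · _) hij _)
  · filter_upwards [hU01] with ω hω using sum_jackpot (hX0 · ω) hω
  · have hφm : Measurable φ := (continuousOn_univ.1 (hφ.continuousOn isOpen_univ)).measurable
    refine hUX.integral_le_integral_comp hU hXv (hφm.comp (measurable_jackpot i)) hYi hXi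
      (ae_of_all _ fun ω => ?_)
    rw [hUlaw]
    exact le_integral_comp_jackpot (hX0 · ω) hφ i

theorem stmt4_general {Ω : Type*} [MeasurableSpace Ω] (P : Measure Ω) [IsProbabilityMeasure P]
    {n : ℕ} (Xv : Fin n → Ω → ℝ) (hmeas : ∀ i, Measurable (Xv i))
    (hbdd : (∃ c, ∀ i ω, c ≤ Xv i ω) ∨ (∃ c, ∀ i ω, Xv i ω ≤ c))
    (U : Ω → ℝ) (hUm : Measurable U)
    (hUlaw : P.map U = (volume : Measure ℝ).restrict (Icc 0 1))
    (hUindep : IndepFun U (fun ω (i : Fin n) => Xv i ω) P) :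
    ∃ Y : Fin n → Ω → ℝ,
      (∀ i, AEMeasurable (Y i) P) ∧
      (∀ i j, i ≠ j → ∀ᵐ p ∂(P.prod P),
        (Y i p.1 - Y i p.2) * (Y j p.1 - Y j p.2) ≤ 0) ∧
      (∀ᵐ ω ∂P, ∑ i, Y i ω = ∑ i, Xv i ω) ∧
      (∀ i (φ : ℝ → ℝ), ConvexOn ℝ univ φ →
        Integrable (fun ω => φ (Xv i ω)) P → Integrable (fun ω => φ (Y i ω)) P →
        ∫ ω, φ (Xv i ω) ∂P ≤ ∫ ω, φ (Y i ω) ∂P) := by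
  suffices hreduce : ∀ a c : ℝ, a ≠ 0 → (∀ i ω, 0 ≤ (Xv i ω - c) / a) →
      ∃ Y, IsCounterMonotonicImprovement P Xv Y by
    rcases hbdd with ⟨c, hc⟩ | ⟨c, hc⟩
    · exact hreduce 1 c one_ne_zero fun i ω => by simpa using hc i ω
    · exact hreduce (-1) c (by norm_num) fun i ω => by simpa [div_neg] using hc i ω
  intro a c ha hX0
  obtain ⟨Y, hY⟩ := exists_isCounterMonotonicImprovement_of_nonneg P
    (fun i ω => (Xv i ω - c) / a) (fun i => ((hmeas i).sub_const c).div_const a) hX0 U hUm hUlaw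
    (hUindep.comp (ψ := fun (v : Fin n → ℝ) i => (v i - c) / a) measurable_id (by fun_prop))
  refine ⟨fun i ω => a * Y i ω + c, ?_⟩
  convert hY.mul_add a c
  rw [mul_div_cancel₀ _ ha, sub_add_cancel]

/-- Counter-monotonic improvement for variables all bounded below (or all bounded above):
there is a counter-monotonic allocation `(Y_1,...,Y_n)` with the same sum and
`X_i ≤_cx Y_i` for every `i`. -/
theorem stmt4 {Ω : Type*} [MeasurableSpace Ω] (P : Measure Ω) [IsProbabilityMeasure P]
    {n : ℕ} (Xv : Fin n → Ω → ℝ) (hmeas : ∀ i, Measurable (Xv i))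
    (hint : ∀ i, Integrable (Xv i) P)
    (hbdd : (∃ c, ∀ i ω, c ≤ Xv i ω) ∨ (∃ c, ∀ i ω, Xv i ω ≤ c))
    (U : Ω → ℝ) (hUm : Measurable U)
    (hUlaw : P.map U = (volume : Measure ℝ).restrict (Icc 0 1))
    (hUindep : IndepFun U (fun ω (i : Fin n) => Xv i ω) P) :
    ∃ Y : Fin n → Ω → ℝ,
      (∀ i, AEMeasurable (Y i) P) ∧
      (∀ i j, i ≠ j → ∀ᵐ p ∂(P.prod P),
        (Y i p.1 - Y i p.2) * (Y j p.1 - Y j p.2) ≤ 0) ∧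
      (∀ᵐ ω ∂P, ∑ i, Y i ω = ∑ i, Xv i ω) ∧
      (∀ i (φ : ℝ → ℝ), ConvexOn ℝ univ φ →
        Integrable (fun ω => φ (Xv i ω)) P → Integrable (fun ω => φ (Y i ω)) P →
        ∫ ω, φ (Xv i ω) ∂P ≤ ∫ ω, φ (Y i ω) ∂P) :=
  stmt4_general P Xv hmeas hbdd U hUm hUlaw hUindep
end

section
/- Pareto optimality of jackpot allocations for constant total payoff: Suppose X = x > 0 is constant, each of n agents is an EU maximizer with strictly increasing continuous strictly convex utility u_i: ℝ₊ → ℝ₊, u_i(0) = 0, and there is a uniform random variable independent of X. Then every jackpot allocation of x (i.e., (x·1_{A_1},...,x·1_{A_n}) for a partition (A_1,...,A_n)) is Pareto optimal among all allocations of x into nonnegative bounded random variables. -/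
/-!
Convexity and `u i 0 = 0` put each utility below its chord on `[0, x]`: `u i z ≤ u i x * (z / x)`.
So whatever an agent receives from an allocation `Z` of `x`, her expected utility is at most that
of a jackpot won with probability `E[Z i] / x`, while the jackpot on `A i` gives exactly
`u i x * P (A i)`. A Pareto improvement would thus force `∑ P (A i) < ∑ E[Z i] / x`, but both
sums equal `1`.
-/

open MeasureTheory Set

theorem ConvexOn.le_mul_div_of_map_zero {s : Set ℝ} {f : ℝ → ℝ} (hf : ConvexOn ℝ s f)
    (hs0 : (0 : ℝ) ∈ s) (hf0 : f 0 = 0) {x z : ℝ} (hxs : x ∈ s) (hx : 0 < x)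
    (hz : z ∈ Icc 0 x) : f z ≤ f x * (z / x) := by
  have ht : 0 ≤ z / x := div_nonneg hz.1 hx.le
  have ht' : 0 ≤ 1 - z / x := sub_nonneg.2 ((div_le_one hx).2 hz.2)
  have := hf.2 hs0 hxs ht' ht (sub_add_cancel 1 (z / x))
  rwa [smul_zero, zero_add, smul_eq_mul, div_mul_cancel₀ z hx.ne', hf0, smul_zero, zero_add,
    smul_eq_mul, mul_comm] at this

section Integrals

variable {Ω : Type*} [MeasurableSpace Ω] {μ : Measure Ω}

theorem integral_comp_const_mul_indicator_one {g : ℝ → ℝ} (hg : g 0 = 0) {A : Set Ω}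
    (hA : MeasurableSet A) (c : ℝ) :
    ∫ ω, g (c * A.indicator 1 ω) ∂μ = g c * μ.real A := by
  have : (fun ω ↦ g (c * A.indicator 1 ω)) = A.indicator (fun _ ↦ g c) := by
    ext ω
    by_cases h : ω ∈ A <;> simp [h, hg]
  rw [this, integral_indicator_const _ hA, smul_eq_mul, mul_comm]

theorem integral_comp_le_mul_integral_div {f : ℝ → ℝ} {x : ℝ} (hf : ConvexOn ℝ (Icc 0 x) f)
    (h0 : f 0 = 0) (hx : 0 < x) (hfx : 0 ≤ f x) {Z : Ω → ℝ} (hZi : Integrable Z μ)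
    (hZ : ∀ᵐ ω ∂μ, Z ω ∈ Icc 0 x) :
    ∫ ω, f (Z ω) ∂μ ≤ f x * ((∫ ω, Z ω ∂μ) / x) := by
  by_cases hfi : Integrable (fun ω ↦ f (Z ω)) μ
  · calc ∫ ω, f (Z ω) ∂μ ≤ ∫ ω, f x * (Z ω / x) ∂μ := by
          refine integral_mono_ae hfi ((hZi.div_const x).const_mul _) ?_
          filter_upwards [hZ] with ω hω
          exact hf.le_mul_div_of_map_zero (left_mem_Icc.2 hx.le) h0 (right_mem_Icc.2 hx.le) hx hω
      _ = f x * ((∫ ω, Z ω ∂μ) / x) := by rw [integral_const_mul, integral_div]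
  · rw [integral_undef hfi]
    have : 0 ≤ ∫ ω, Z ω ∂μ := integral_nonneg_of_ae (by filter_upwards [hZ] with ω hω using hω.1)
    positivity

variable {ι : Type*} [Fintype ι] {Z : ι → Ω → ℝ} {x : ℝ}

theorem ae_mem_Icc_of_ae_sum_eq (hZ : ∀ i, ∀ᵐ ω ∂μ, 0 ≤ Z i ω) (hsum : ∀ᵐ ω ∂μ, ∑ i, Z i ω = x)
    (i : ι) : ∀ᵐ ω ∂μ, Z i ω ∈ Icc 0 x := by
  filter_upwards [hsum, ae_all_iff.2 hZ] with ω hω hnn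
  exact ⟨hnn i, hω ▸ Finset.single_le_sum (fun k _ ↦ hnn k) (Finset.mem_univ i)⟩

theorem sum_integral_eq_of_ae_sum_eq [IsProbabilityMeasure μ] (hZi : ∀ i, Integrable (Z i) μ)
    (hsum : ∀ᵐ ω ∂μ, ∑ i, Z i ω = x) : ∑ i, ∫ ω, Z i ω ∂μ = x := by
  rw [← integral_finsetSum _ fun i _ ↦ hZi i, integral_congr_ae hsum, integral_const,
    probReal_univ, one_smul]

end Integrals

theorem stmt8_general {Ω : Type*} [MeasurableSpace Ω] (P : Measure Ω) [IsProbabilityMeasure P]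
    {n : ℕ} (u : Fin n → ℝ → ℝ)
    (hu_mono : ∀ i, StrictMonoOn (u i) (Ici 0))
    (hu_conv : ∀ i, StrictConvexOn ℝ (Ici 0) (u i))
    (hu0 : ∀ i, u i 0 = 0)
    (x : ℝ) (hx : 0 < x)
    (A : Fin n → Set Ω) (hAm : ∀ i, MeasurableSet (A i))
    (hApart : Pairwise (Function.onFun Disjoint A)) (hAunion : (⋃ i, A i) = univ) :
    ∀ Z : Fin n → Ω → ℝ, (∀ i, AEMeasurable (Z i) P) →
      (∀ i, ∀ᵐ ω ∂P, 0 ≤ Z i ω) → (∀ᵐ ω ∂P, ∑ i, Z i ω = x) →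
      ¬((∀ i, ∫ ω, u i (x * (A i).indicator 1 ω) ∂P ≤ ∫ ω, u i (Z i ω) ∂P) ∧
        ∃ j, ∫ ω, u j (x * (A j).indicator 1 ω) ∂P < ∫ ω, u j (Z j ω) ∂P) := by
  rintro Z hZm hZnn hZsum ⟨hle, j, hlt⟩
  have hZ := ae_mem_Icc_of_ae_sum_eq hZnn hZsum
  have hZi (i : Fin n) : Integrable (Z i) P :=
    Integrable.of_bound (hZm i).aestronglyMeasurable x <| by
      filter_upwards [hZ i] with ω hω
      rw [Real.norm_eq_abs, abs_of_nonneg hω.1]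
      exact hω.2
  have hux (i : Fin n) : 0 < u i x := hu0 i ▸ hu_mono i self_mem_Ici hx.le hx
  have hEU (i : Fin n) : ∫ ω, u i (Z i ω) ∂P ≤ u i x * ((∫ ω, Z i ω ∂P) / x) :=
    integral_comp_le_mul_integral_div ((hu_conv i).convexOn.subset Icc_subset_Ici_self
      (convex_Icc 0 x)) (hu0 i) hx (hux i).le (hZi i) (hZ i)
  have hjack (i : Fin n) := integral_comp_const_mul_indicator_one (μ := P) (hu0 i) (hAm i) x
  have hprob : ∑ i, P.real (A i) < ∑ i, (∫ ω, Z i ω ∂P) / x :=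
    Finset.sum_lt_sum
      (fun i _ ↦ le_of_mul_le_mul_left ((hjack i ▸ hle i).trans (hEU i)) (hux i))
      ⟨j, Finset.mem_univ j, lt_of_mul_lt_mul_left ((hjack j ▸ hlt).trans_le (hEU j)) (hux j).le⟩
  rw [← measureReal_iUnion_fintype hApart hAm, hAunion, probReal_univ, ← Finset.sum_div,
    sum_integral_eq_of_ae_sum_eq hZi hZsum, div_self hx.ne'] at hprob
  exact lt_irrefl 1 hprob

/-- Pareto optimality of jackpot allocations for a constant total payoff `x > 0` shared
among `n` strictly risk-seeking EU agents, given external randomization (a uniform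
random variable on the space). -/
theorem stmt8 {Ω : Type*} [MeasurableSpace Ω] (P : Measure Ω) [IsProbabilityMeasure P]
    {n : ℕ} (u : Fin n → ℝ → ℝ)
    (hu_mono : ∀ i, StrictMonoOn (u i) (Ici 0))
    (hu_cont : ∀ i, ContinuousOn (u i) (Ici 0))
    (hu_conv : ∀ i, StrictConvexOn ℝ (Ici 0) (u i))
    (hu0 : ∀ i, u i 0 = 0) (hu_nonneg : ∀ i x, 0 ≤ x → 0 ≤ u i x)
    (x : ℝ) (hx : 0 < x)
    (U : Ω → ℝ) (hUm : Measurable U)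
    (hUlaw : P.map U = (volume : Measure ℝ).restrict (Icc 0 1))
    (A : Fin n → Set Ω) (hAm : ∀ i, MeasurableSet (A i))
    (hApart : Pairwise (Function.onFun Disjoint A)) (hAunion : (⋃ i, A i) = univ) :
    ∀ Z : Fin n → Ω → ℝ, (∀ i, AEMeasurable (Z i) P) →
      (∀ i, ∀ᵐ ω ∂P, 0 ≤ Z i ω) → (∀ᵐ ω ∂P, ∑ i, Z i ω = x) →
      ¬((∀ i, ∫ ω, u i (x * (A i).indicator 1 ω) ∂P ≤ ∫ ω, u i (Z i ω) ∂P) ∧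
        ∃ j, ∫ ω, u j (x * (A j).indicator 1 ω) ∂P < ∫ ω, u j (Z j ω) ∂P) :=
  stmt8_general P u hu_mono hu_conv hu0 x hx A hAm hApart hAunion
end

section
/- Simplex structure of the utility possibility frontier for homogeneous risk-seeking EU agents: Let u: ℝ₊ → ℝ₊ be strictly increasing, continuous, strictly convex with u(0) = 0, let X be a nonnegative bounded random variable with P(X > 0) > 0, and assume there exists a uniform random variable independent of X. Then the set of utility vectors (E[u(X·1_{A_1})],...,E[u(X·1_{A_n})]) over all partitions (A_1,...,A_n) of Ω equals the scaled simplex Δ_n(E[u(X)]) = {θ·E[u(X)] : θ ∈ Δ_n}. -/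
open MeasureTheory Set ProbabilityTheory

/-!
Since `u 0 = 0`, the utility of agent `i` is `E[u(X); A_i]`, and these masses of the
measure `u(X) · P` over a partition are `E[u(X)] > 0` times a point of the simplex.
Conversely, a simplex point is a law on the indices, which is the image of the uniform
variable `U` under a measurable map `g` (a quantile transform); the fibres of `g ∘ U` form a
partition independent of `X` with `P(A_i) = θ_i`, so `E[u(X); A_i] = θ_i E[u(X)]`.
-/

theorem comp_mul_indicator_one_eq_indicator {Ω : Type*} {u : ℝ → ℝ} (hu0 : u 0 = 0) (X : Ω → ℝ)
    (A : Set Ω) : (fun ω => u (X ω * A.indicator 1 ω)) = A.indicator (fun ω => u (X ω)) := by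
  ext ω
  by_cases h : ω ∈ A <;> simp [h, hu0]

theorem exists_measurable_map_restrict_unitInterval_eq {Y : Type*} [Nonempty Y]
    [MeasurableSpace Y] [StandardBorelSpace Y] (μ : Measure Y) [IsProbabilityMeasure μ] :
    ∃ g : ℝ → Y, Measurable g ∧ (volume.restrict (Icc 0 1)).map g = μ := by
  obtain ⟨f, hf, hfμ⟩ := μ.exists_measurable_map_eq
  have hproj : Measurable (projIcc (0 : ℝ) 1 zero_le_one) := continuous_projIcc.measurable
  refine ⟨f ∘ projIcc 0 1 zero_le_one, hf.comp hproj, ?_⟩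
  rw [← Measure.map_map hf hproj, ← map_comap_subtype_coe measurableSet_Icc,
    Measure.map_map hproj measurable_subtype_coe]
  simp only [Function.comp_def, projIcc_val, Measure.map_id']
  exact hfμ

theorem exists_isProbabilityMeasure_measureReal_singleton_eq {ι : Type*} [Fintype ι]
    [MeasurableSpace ι] [MeasurableSingletonClass ι] {θ : ι → ℝ} (hθ : θ ∈ stdSimplex ℝ ι) :
    ∃ μ : Measure ι, IsProbabilityMeasure μ ∧ ∀ i, μ.real {i} = θ i := by
  have hsum : ∑ i, ENNReal.ofReal (θ i) = 1 := by
    rw [← ENNReal.ofReal_sum_of_nonneg fun i _ => hθ.1 i, hθ.2, ENNReal.ofReal_one]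
  refine ⟨(PMF.ofFintype _ hsum).toMeasure, inferInstance, fun i => ?_⟩
  rw [measureReal_def, PMF.toMeasure_apply_singleton _ _ (measurableSet_singleton i),
    PMF.ofFintype_apply, ENNReal.toReal_ofReal (hθ.1 i)]

section

variable {Ω : Type*} [MeasurableSpace Ω] {P : Measure Ω}

theorem exists_mem_stdSimplex_setIntegral_eq {ι : Type*} [Fintype ι] {Y : Ω → ℝ}
    (hY0 : 0 ≤ Y) (hY : Integrable Y P) (hpos : 0 < ∫ ω, Y ω ∂P)
    {A : ι → Set Ω} (hA : ∀ i, MeasurableSet (A i)) (hAd : Pairwise (Function.onFun Disjoint A))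
    (hAU : ⋃ i, A i = univ) :
    ∃ θ ∈ stdSimplex ℝ ι, ∀ i, ∫ ω in A i, Y ω ∂P = θ i * ∫ ω, Y ω ∂P := by
  refine ⟨fun i => (∫ ω in A i, Y ω ∂P) / ∫ ω, Y ω ∂P, ⟨fun i => ?_, ?_⟩, fun i => ?_⟩
  · exact div_nonneg (setIntegral_nonneg (hA i) fun ω _ => hY0 ω) hpos.le
  · rw [← Finset.sum_div, ← integral_iUnion_fintype hA hAd fun i => hY.integrableOn, hAU,
      Measure.restrict_univ, div_self hpos.ne']
  · exact (div_mul_cancel₀ _ hpos.ne').symm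

theorem ProbabilityTheory.IndepFun.setIntegral_preimage_eq {β : Type*} [MeasurableSpace β]
    {V : Ω → β} {Y : Ω → ℝ} (hVY : IndepFun V Y P) (hV : Measurable V)
    (hY : AEStronglyMeasurable Y P) {S : Set β} (hS : MeasurableSet S) :
    ∫ ω in V ⁻¹' S, Y ω ∂P = P.real (V ⁻¹' S) * ∫ ω, Y ω ∂P := by
  have hind : IndepFun ((V ⁻¹' S).indicator (1 : Ω → ℝ)) Y P :=
    hVY.comp (measurable_one.indicator hS : Measurable (S.indicator (1 : β → ℝ))) measurable_id
  rw [← integral_indicator_one (hV hS), ← hind.integral_fun_mul_eq_mul_integral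
    ((measurable_one.indicator (hV hS)).aestronglyMeasurable) hY, ← integral_indicator (hV hS)]
  congr 1
  ext ω
  by_cases h : ω ∈ V ⁻¹' S <;> simp [h]

theorem exists_partition_setIntegral_eq_mul {ι : Type*} [Fintype ι] {U Y : Ω → ℝ}
    (hU : Measurable U) (hUlaw : P.map U = volume.restrict (Icc 0 1)) (hUY : IndepFun U Y P)
    (hY : AEStronglyMeasurable Y P) {θ : ι → ℝ} (hθ : θ ∈ stdSimplex ℝ ι) :
    ∃ A : ι → Set Ω, (∀ i, MeasurableSet (A i)) ∧ Pairwise (Function.onFun Disjoint A) ∧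
      ⋃ i, A i = univ ∧ ∀ i, ∫ ω in A i, Y ω ∂P = θ i * ∫ ω, Y ω ∂P := by
  let _ : MeasurableSpace ι := ⊤
  have : DiscreteMeasurableSpace ι := ⟨fun _ => trivial⟩
  have : Nonempty ι := by
    by_contra h
    simpa [not_nonempty_iff.mp h] using hθ.2
  obtain ⟨μ, hμ, hμθ⟩ := exists_isProbabilityMeasure_measureReal_singleton_eq hθ
  obtain ⟨g, hg, hgμ⟩ := exists_measurable_map_restrict_unitInterval_eq μ
  have hgU : Measurable (g ∘ U) := hg.comp hU
  have hgUY : IndepFun (g ∘ U) Y P := hUY.comp hg measurable_id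
  refine ⟨fun i => (g ∘ U) ⁻¹' {i}, fun i => hgU (measurableSet_singleton i),
    pairwise_disjoint_fiber _,
    by rw [← preimage_iUnion, iUnion_of_singleton, preimage_univ], fun i => ?_⟩
  rw [hgUY.setIntegral_preimage_eq hgU hY (measurableSet_singleton i),
    ← map_measureReal_apply hgU (measurableSet_singleton i), ← Measure.map_map hg hU, hUlaw, hgμ,
    hμθ]

end

theorem stmt9_general {Ω : Type*} [MeasurableSpace Ω] (P : Measure Ω) [IsProbabilityMeasure P]
    (u : ℝ → ℝ) (hu_mono : StrictMonoOn u (Ici 0)) (hu_cont : ContinuousOn u (Ici 0))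
    (hu0 : u 0 = 0)
    (hu_nonneg : ∀ x, 0 ≤ x → 0 ≤ u x)
    (X : Ω → ℝ) (hXm : Measurable X) (hX0 : ∀ ω, 0 ≤ X ω) (M : ℝ) (hXb : ∀ ω, X ω ≤ M)
    (hXpos : 0 < P {ω | 0 < X ω})
    {n : ℕ}
    (U : Ω → ℝ) (hUm : Measurable U)
    (hUlaw : P.map U = (volume : Measure ℝ).restrict (Icc 0 1))
    (hUindep : IndepFun U X P) :
    {v : Fin n → ℝ | ∃ A : Fin n → Set Ω, (∀ i, MeasurableSet (A i)) ∧
        Pairwise (Function.onFun Disjoint A) ∧ (⋃ i, A i) = univ ∧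
        v = fun i => ∫ ω, u (X ω * (A i).indicator 1 ω) ∂P}
      = {v : Fin n → ℝ | ∃ θ : Fin n → ℝ, (∀ i, 0 ≤ θ i) ∧ (∑ i, θ i = 1) ∧
        v = fun i => θ i * ∫ ω, u (X ω) ∂P} := by
  have hu_max : Continuous fun x => u (max x 0) :=
    hu_cont.comp_continuous (continuous_id.max continuous_const) fun x => le_max_right x 0
  have huX : (fun ω => u (X ω)) = (fun x => u (max x 0)) ∘ X := by
    ext ω
    simp [max_eq_left (hX0 ω)]
  have hmeas : Measurable fun ω => u (X ω) := huX ▸ hu_max.measurable.comp hXm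
  have hindep : IndepFun U (fun ω => u (X ω)) P :=
    huX ▸ hUindep.comp measurable_id hu_max.measurable
  have hint : Integrable (fun ω => u (X ω)) P :=
    .of_bound hmeas.aestronglyMeasurable (u M) (.of_forall fun ω => by
      rw [Real.norm_of_nonneg (hu_nonneg _ (hX0 ω))]
      exact hu_mono.monotoneOn (hX0 ω) ((hX0 ω).trans (hXb ω)) (hXb ω))
  have hpos : 0 < ∫ ω, u (X ω) ∂P := by
    rw [integral_pos_iff_support_of_nonneg (fun ω => hu_nonneg _ (hX0 ω)) hint]
    refine hXpos.trans_le (measure_mono fun ω (hω : 0 < X ω) => ?_)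
    exact (hu0 ▸ hu_mono self_mem_Ici hω.le hω : 0 < u (X ω)).ne'
  ext v
  simp only [comp_mul_indicator_one_eq_indicator hu0]
  constructor
  · rintro ⟨A, hA, hAd, hAU, rfl⟩
    obtain ⟨θ, ⟨hθ0, hθ1⟩, hθ⟩ := exists_mem_stdSimplex_setIntegral_eq
      (fun ω => hu_nonneg _ (hX0 ω)) hint hpos hA hAd hAU
    exact ⟨θ, hθ0, hθ1, funext fun i => by rw [integral_indicator (hA i), hθ]⟩
  · rintro ⟨θ, hθ0, hθ1, rfl⟩
    obtain ⟨A, hA, hAd, hAU, hθ⟩ := exists_partition_setIntegral_eq_mul hUm hUlaw hindep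
      hmeas.aestronglyMeasurable ⟨hθ0, hθ1⟩
    exact ⟨A, hA, hAd, hAU, funext fun i => by rw [integral_indicator (hA i), hθ]⟩

/-- Simplex structure of the utility possibility frontier for homogeneous risk-seeking EU
agents: the set of utility vectors of jackpot allocations of `X` equals the scaled simplex
`Δ_n(E[u(X)])`. -/
theorem stmt9 {Ω : Type*} [MeasurableSpace Ω] (P : Measure Ω) [IsProbabilityMeasure P]
    (u : ℝ → ℝ) (hu_mono : StrictMonoOn u (Ici 0)) (hu_cont : ContinuousOn u (Ici 0))
    (hu_conv : StrictConvexOn ℝ (Ici 0) u) (hu0 : u 0 = 0)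
    (hu_nonneg : ∀ x, 0 ≤ x → 0 ≤ u x)
    (X : Ω → ℝ) (hXm : Measurable X) (hX0 : ∀ ω, 0 ≤ X ω) (M : ℝ) (hXb : ∀ ω, X ω ≤ M)
    (hXpos : 0 < P {ω | 0 < X ω})
    {n : ℕ} (hn : 0 < n)
    (U : Ω → ℝ) (hUm : Measurable U)
    (hUlaw : P.map U = (volume : Measure ℝ).restrict (Icc 0 1))
    (hUindep : IndepFun U X P) :
    {v : Fin n → ℝ | ∃ A : Fin n → Set Ω, (∀ i, MeasurableSet (A i)) ∧
        Pairwise (Function.onFun Disjoint A) ∧ (⋃ i, A i) = univ ∧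
        v = fun i => ∫ ω, u (X ω * (A i).indicator 1 ω) ∂P}
      = {v : Fin n → ℝ | ∃ θ : Fin n → ℝ, (∀ i, 0 ≤ θ i) ∧ (∑ i, θ i = 1) ∧
        v = fun i => θ i * ∫ ω, u (X ω) ∂P} :=
  stmt9_general P u hu_mono hu_cont hu0 hu_nonneg X hXm hX0 M hXb hXpos U hUm hUlaw hUindep
end

section
/- Individual optimality of jackpot allocations under the comonotone price: Let u: ℝ₊ → ℝ₊ be such that x ↦ u(x)/x is increasing on (0,∞) with u(0) = 0, let X ≥ 0 be bounded with E[u(X)/X] =: z ∈ (0,∞), and define the price measure Q by dQ/dP = (u(X)/X)/z. Let A be an event independent of X under P. Then for every random variable Y with 0 ≤ Y ≤ X and E^Q[Y] ≤ E^Q[X·1_A], we have E[u(Y)] ≤ E[u(X·1_A)]. In particular X·1_A solves the agent's budget-constrained EU maximization at price Q. -/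
/-!
Write `u x = x · r x`, where `r x = u x / x` is increasing. For `0 ≤ Y ≤ X`,
`u Y = Y · r Y ≤ Y · r X`, and `r X` is `z` times the price density, so
`E[u Y] ≤ z · E^Q[Y] ≤ z · E^Q[X 1_A] = E[X 1_A · r X] = E[u (X 1_A)]`,
the last step because `1_A` only takes the values `0` and `1` and `u 0 = 0`.
-/

open MeasureTheory Set ProbabilityTheory

/-- Extended by `0` on `(-∞, 0]` so that it is monotone on all of `ℝ`, hence measurable. -/
noncomputable def utilityRatio (u : ℝ → ℝ) (x : ℝ) : ℝ := if 0 < x then u x / x else 0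

namespace utilityRatio

variable {u : ℝ → ℝ}

theorem of_nonneg (hu0 : u 0 = 0) {x : ℝ} (hx : 0 ≤ x) : utilityRatio u x = u x / x := by
  rcases hx.lt_or_eq with hx | rfl
  · simp [utilityRatio, hx]
  · simp [utilityRatio, hu0]

theorem mul_self_eq (hu0 : u 0 = 0) {x : ℝ} (hx : 0 ≤ x) : x * utilityRatio u x = u x := by
  rcases hx.lt_or_eq with hx | rfl
  · rw [of_nonneg hu0 hx.le, mul_div_cancel₀ _ hx.ne']
  · simp [hu0]

theorem nonneg (hu_nonneg : ∀ x, 0 ≤ x → 0 ≤ u x) (x : ℝ) : 0 ≤ utilityRatio u x := by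
  unfold utilityRatio
  split_ifs with hx
  · exact div_nonneg (hu_nonneg x hx.le) hx.le
  · exact le_rfl

theorem monotone (hu_nonneg : ∀ x, 0 ≤ x → 0 ≤ u x)
    (hratio : ∀ x y : ℝ, 0 < x → x ≤ y → u x / x ≤ u y / y) : Monotone (utilityRatio u) := by
  intro x y hxy
  by_cases hx : 0 < x
  · simp only [utilityRatio, hx, lt_of_lt_of_le hx hxy, if_true]
    exact hratio x y hx hxy
  · simp only [utilityRatio, hx, if_false]
    exact nonneg hu_nonneg y

theorem apply_le_mul (hu0 : u 0 = 0) (hu_nonneg : ∀ x, 0 ≤ x → 0 ≤ u x)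
    (hratio : ∀ x y : ℝ, 0 < x → x ≤ y → u x / x ≤ u y / y) {x y : ℝ} (hy : 0 ≤ y)
    (hyx : y ≤ x) : u y ≤ y * utilityRatio u x := by
  rw [← mul_self_eq hu0 hy]
  exact mul_le_mul_of_nonneg_left (monotone hu_nonneg hratio hyx) hy

theorem mul_le_mul_self (hu_nonneg : ∀ x, 0 ≤ x → 0 ≤ u x)
    (hratio : ∀ x y : ℝ, 0 < x → x ≤ y → u x / x ≤ u y / y) {x y M : ℝ} (hy : 0 ≤ y)
    (hyx : y ≤ x) (hxM : x ≤ M) : y * utilityRatio u x ≤ M * utilityRatio u M :=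
  mul_le_mul (hyx.trans hxM) (monotone hu_nonneg hratio hxM) (nonneg hu_nonneg x)
    (hy.trans (hyx.trans hxM))

end utilityRatio

theorem mul_integral_withDensity_ofReal_div {Ω : Type*} [MeasurableSpace Ω] (P : Measure Ω)
    {f : Ω → ℝ} (hf : Measurable f) (hf0 : ∀ ω, 0 ≤ f ω) {z : ℝ} (hz : 0 < z) (g : Ω → ℝ) :
    z * ∫ ω, g ω ∂P.withDensity (fun ω => ENNReal.ofReal (f ω / z)) = ∫ ω, g ω * f ω ∂P := by
  rw [integral_withDensity_eq_integral_toReal_smul (hf.div_const z).ennreal_ofReal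
    (Filter.Eventually.of_forall fun _ => ENNReal.ofReal_lt_top), ← integral_const_mul]
  congr 1
  ext ω
  rw [ENNReal.toReal_ofReal (div_nonneg (hf0 ω) hz.le), smul_eq_mul]
  field_simp

theorem stmt13_general {Ω : Type*} [MeasurableSpace Ω] (P : Measure Ω) [IsProbabilityMeasure P]
    (u : ℝ → ℝ) (hu0 : u 0 = 0) (hu_nonneg : ∀ x, 0 ≤ x → 0 ≤ u x)
    (hratio : ∀ x y : ℝ, 0 < x → x ≤ y → u x / x ≤ u y / y)
    (X : Ω → ℝ) (hXm : Measurable X) (hX0 : ∀ ω, 0 ≤ X ω) (M : ℝ) (hXb : ∀ ω, X ω ≤ M)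
    (z : ℝ) (hzpos : 0 < z)
    (Q : Measure Ω)
    (hQ : Q = P.withDensity fun ω => ENNReal.ofReal (u (X ω) / X ω / z))
    (A : Set Ω) :
    ∀ Y : Ω → ℝ, Measurable Y → (∀ ω, 0 ≤ Y ω ∧ Y ω ≤ X ω) →
      ∫ ω, Y ω ∂Q ≤ ∫ ω, X ω * A.indicator 1 ω ∂Q →
      ∫ ω, u (Y ω) ∂P ≤ ∫ ω, u (X ω * A.indicator 1 ω) ∂P := by
  intro Y hYm hY hbudget
  set r := utilityRatio u
  have hr_meas : Measurable r := (utilityRatio.monotone hu_nonneg hratio).measurable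
  have hQ_price : ∀ g : Ω → ℝ, z * ∫ ω, g ω ∂Q = ∫ ω, g ω * r (X ω) ∂P := by
    have hdens : ∀ ω, u (X ω) / X ω = r (X ω) :=
      fun ω => (utilityRatio.of_nonneg hu0 (hX0 ω)).symm
    simpa only [hQ, hdens] using mul_integral_withDensity_ofReal_div P
      (f := fun ω => r (X ω)) (hr_meas.comp hXm) (fun ω => utilityRatio.nonneg hu_nonneg _) hzpos
  have hYr_int : Integrable (fun ω => Y ω * r (X ω)) P := by
    refine .of_bound (hYm.mul (hr_meas.comp hXm)).aestronglyMeasurable (M * r M)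
      (Filter.Eventually.of_forall fun ω => ?_)
    rw [Real.norm_of_nonneg (mul_nonneg (hY ω).1 (utilityRatio.nonneg hu_nonneg _))]
    exact utilityRatio.mul_le_mul_self hu_nonneg hratio (hY ω).1 (hY ω).2 (hXb ω)
  have hjackpot : ∀ ω, X ω * A.indicator 1 ω * r (X ω) = u (X ω * A.indicator 1 ω) := by
    intro ω
    by_cases hω : ω ∈ A
    · simpa [hω] using utilityRatio.mul_self_eq hu0 (hX0 ω)
    · simp [hω, hu0]
  calc ∫ ω, u (Y ω) ∂P ≤ ∫ ω, Y ω * r (X ω) ∂P :=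
        integral_mono_of_nonneg (Filter.Eventually.of_forall fun ω => hu_nonneg _ (hY ω).1)
          hYr_int (Filter.Eventually.of_forall fun ω =>
            utilityRatio.apply_le_mul hu0 hu_nonneg hratio (hY ω).1 (hY ω).2)
    _ = z * ∫ ω, Y ω ∂Q := (hQ_price Y).symm
    _ ≤ z * ∫ ω, X ω * A.indicator 1 ω ∂Q := mul_le_mul_of_nonneg_left hbudget hzpos.le
    _ = ∫ ω, u (X ω * A.indicator 1 ω) ∂P := by
        rw [hQ_price]
        exact integral_congr_ae (Filter.Eventually.of_forall hjackpot)

/-- Individual optimality of jackpot allocations under the comonotone price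
`dQ/dP = (u(X)/X)/z` with `z = E[u(X)/X]`: any budget-feasible `0 ≤ Y ≤ X` satisfies
`E[u(Y)] ≤ E[u(X·1_A)]` for an event `A` independent of `X`. (Convention `0/0 = 0`.) -/
theorem stmt13 {Ω : Type*} [MeasurableSpace Ω] (P : Measure Ω) [IsProbabilityMeasure P]
    (u : ℝ → ℝ) (hu0 : u 0 = 0) (hu_nonneg : ∀ x, 0 ≤ x → 0 ≤ u x)
    (hratio : ∀ x y : ℝ, 0 < x → x ≤ y → u x / x ≤ u y / y)
    (X : Ω → ℝ) (hXm : Measurable X) (hX0 : ∀ ω, 0 ≤ X ω) (M : ℝ) (hXb : ∀ ω, X ω ≤ M)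
    (z : ℝ) (hz : z = ∫ ω, u (X ω) / X ω ∂P) (hzpos : 0 < z)
    (Q : Measure Ω)
    (hQ : Q = P.withDensity fun ω => ENNReal.ofReal (u (X ω) / X ω / z))
    (A : Set Ω) (hAm : MeasurableSet A)
    (hAindep : IndepFun (A.indicator (1 : Ω → ℝ)) X P) :
    ∀ Y : Ω → ℝ, Measurable Y → (∀ ω, 0 ≤ Y ω ∧ Y ω ≤ X ω) →
      ∫ ω, Y ω ∂Q ≤ ∫ ω, X ω * A.indicator 1 ω ∂Q →
      ∫ ω, u (Y ω) ∂P ≤ ∫ ω, u (X ω * A.indicator 1 ω) ∂P :=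
  stmt13_general P u hu0 hu_nonneg hratio X hXm hX0 M hXb z hzpos Q hQ A
end

section
/- Equilibrium allocations of strictly risk-seeking agents are extreme: Suppose agent i has strictly convex, strictly increasing utility u_i with u_i(0) = 0, the probability space is atomless, and (X_1,...,X_n, Q) is a competitive equilibrium (each X_i maximizes E[u_i(Z)] over 0 ≤ Z ≤ X subject to E^Q[Z] ≤ E^Q[ξ_i]). Then for every strictly risk-seeking agent i, X_i·(X − X_i) = 0 almost surely, i.e., in every state agent i receives either nothing or the entire aggregate endowment. Consequently, if S is the set of strictly risk-seeking agents and Y = X − ∑_{i∈S} X_i, then ((X_i)_{i∈S}, Y) is a jackpot allocation. -/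
/-!
If an optimal demand `f` lay strictly between `0` and `X` on a set of positive measure, it would
lie in `[ε, X - ε]` on some set `A` of positive measure. Since `P` has no atoms, `A` splits into
two pieces carrying a perturbation `g`, supported in `A` with `|g| ≤ ε`, that costs nothing under
`Q`. Then `f + g` and `f - g` are both affordable, and strict convexity gives
`E[u(f + g)] + E[u(f - g)] > 2 E[u(f)]`, so one of them beats `f`. Hence every strictly
risk-seeking agent gets `0` or `X` almost surely; as the nonnegative demands add up to `X`, one
agent getting `X` leaves nothing to the others.
-/

open MeasureTheory Set

lemma StrictConvexOn.two_mul_lt_add_sub {s : Set ℝ} {v : ℝ → ℝ} (hv : StrictConvexOn ℝ s v)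
    {x y : ℝ} (hs₁ : x + y ∈ s) (hs₂ : x - y ∈ s) (hy : y ≠ 0) :
    2 * v x < v (x + y) + v (x - y) := by
  have hlt := hv.2 hs₁ hs₂ (by contrapose! hy; linarith) one_half_pos one_half_pos
    (add_halves (1 : ℝ))
  have hmid : (1 / 2 : ℝ) • (x + y) + (1 / 2 : ℝ) • (x - y) = x := by
    simp only [smul_eq_mul]; ring
  rw [hmid, smul_eq_mul, smul_eq_mul] at hlt
  linarith

lemma StrictConvexOn.two_mul_le_add_sub {s : Set ℝ} {v : ℝ → ℝ} (hv : StrictConvexOn ℝ s v)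
    {x y : ℝ} (hs₁ : x + y ∈ s) (hs₂ : x - y ∈ s) :
    2 * v x ≤ v (x + y) + v (x - y) := by
  rcases eq_or_ne y 0 with rfl | hy
  · simp only [add_zero, sub_zero]; linarith
  · exact (hv.two_mul_lt_add_sub hs₁ hs₂ hy).le

lemma Finset.eq_zero_of_eq_sum_of_ne {ι α : Type*} [Fintype ι] [AddCommMonoid α] [PartialOrder α]
    [IsOrderedCancelAddMonoid α] {x : ι → α} (hx : ∀ k, 0 ≤ x k) {i : ι}
    (hi : x i = ∑ k, x k) {j : ι} (hji : j ≠ i) : x j = 0 := by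
  classical
  rw [← Finset.add_sum_erase _ _ (Finset.mem_univ i), left_eq_add] at hi
  exact (Finset.sum_eq_zero_iff_of_nonneg fun k _ => hx k).1 hi j
    (Finset.mem_erase.2 ⟨hji, Finset.mem_univ j⟩)

section

variable {Ω : Type*} [MeasurableSpace Ω] {P Q : Measure Ω}

lemma MonotoneOn.integrable_comp_of_ae_mem_Icc [IsFiniteMeasure P] {v : ℝ → ℝ}
    (hv : MonotoneOn v (Ici 0)) {Z : Ω → ℝ} (hZ : Measurable Z) {M : ℝ}
    (hZM : ∀ᵐ ω ∂P, Z ω ∈ Icc 0 M) : Integrable (fun ω => v (Z ω)) P := by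
  have hmono : Monotone fun x => v (max x 0) := fun x y hxy =>
    hv (le_max_right x 0) (le_max_right y 0) (max_le_max_right 0 hxy)
  have hae : (fun ω => v (max (Z ω) 0)) =ᵐ[P] fun ω => v (Z ω) := by
    filter_upwards [hZM] with ω h
    rw [max_eq_left h.1]
  refine Integrable.mono' (integrable_const (max |v 0| |v M|))
    ((hmono.measurable.comp hZ).aestronglyMeasurable.congr hae) ?_
  filter_upwards [hZM] with ω h
  exact abs_le_max_abs_abs (hv self_mem_Ici h.1 h.1) (hv h.1 (h.1.trans h.2) h.2)

lemma exists_pos_measure_setOf_le {h : Ω → ℝ} (hpos : P {ω | 0 < h ω} ≠ 0) :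
    ∃ ε > 0, 0 < P {ω | ε ≤ h ω} := by
  have hcover : {ω | 0 < h ω} ⊆ ⋃ n : ℕ, {ω | 1 / ((n : ℝ) + 1) ≤ h ω} := by
    intro ω (hω : 0 < h ω)
    obtain ⟨n, hn⟩ := exists_nat_one_div_lt hω
    exact mem_iUnion.2 ⟨n, hn.le⟩
  obtain ⟨n, hn⟩ := exists_measure_pos_of_not_measure_iUnion_null
    fun h0 => hpos (measure_mono_null hcover h0)
  exact ⟨_, Nat.one_div_pos_of_nat, hn⟩

lemma exists_disjoint_subsets_of_atomless
    (hatomless : ∀ s : Set Ω, MeasurableSet s → 0 < P s →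
      ∃ t, t ⊆ s ∧ MeasurableSet t ∧ 0 < P t ∧ P t < P s)
    {A : Set Ω} (hA : MeasurableSet A) (hPA : 0 < P A) (hQA : Q A ≠ 0) :
    ∃ t s : Set Ω, MeasurableSet t ∧ MeasurableSet s ∧ t ⊆ A ∧ s ⊆ A ∧ Disjoint t s ∧
      Q t ≠ 0 ∧ 0 < P s := by
  obtain ⟨t, htA, ht, hPt, hPtA⟩ := hatomless A hA hPA
  by_cases hQt : Q t = 0
  · exact ⟨A \ t, t, hA.diff ht, ht, sdiff_subset, htA, disjoint_sdiff_left,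
      by rwa [measure_sdiff_null hQt], hPt⟩
  · exact ⟨t, A \ t, ht, hA.diff ht, htA, sdiff_subset, disjoint_sdiff_right, hQt,
      (tsub_pos_of_lt hPtA).trans_le le_measure_sdiff⟩

lemma exists_integral_eq_zero_of_atomless [IsProbabilityMeasure Q]
    (hatomless : ∀ s : Set Ω, MeasurableSet s → 0 < P s →
      ∃ t, t ⊆ s ∧ MeasurableSet t ∧ 0 < P t ∧ P t < P s)
    {A : Set Ω} (hA : MeasurableSet A) (hPA : 0 < P A) {ε : ℝ} (hε : 0 < ε) :
    ∃ g : Ω → ℝ, Measurable g ∧ (∀ ω, |g ω| ≤ ε) ∧ Function.support g ⊆ A ∧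
      ∫ ω, g ω ∂Q = 0 ∧ 0 < P (Function.support g) := by
  by_cases hQA : Q A = 0
  · refine ⟨A.indicator fun _ => ε, measurable_const.indicator hA, fun ω => ?_,
      support_indicator_subset, ?_, ?_⟩
    · by_cases hω : ω ∈ A <;> simp [hω, abs_of_pos hε, hε.le]
    · simp [integral_indicator_const _ hA, measureReal_def, hQA]
    · rwa [support_indicator, Function.support_const hε.ne', inter_univ]
  obtain ⟨t, s, ht, hs, htA, hsA, hts, hQt, hPs⟩ :=
    exists_disjoint_subsets_of_atomless hatomless hA hPA hQA
  have hQt' : 0 < Q.real t := ENNReal.toReal_pos hQt (measure_ne_top Q t)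
  set a := ε * Q.real s
  set b := ε * Q.real t
  have ha : a ∈ Icc 0 ε := ⟨by positivity, mul_le_of_le_one_right hε.le measureReal_le_one⟩
  have hb : b ∈ Ioc 0 ε := ⟨by positivity, mul_le_of_le_one_right hε.le measureReal_le_one⟩
  have hgs : ∀ ω ∈ s, t.indicator (fun _ => a) ω - s.indicator (fun _ => b) ω = -b :=
    fun ω hω => by simp [hω, disjoint_right.1 hts hω]
  refine ⟨fun ω => t.indicator (fun _ => a) ω - s.indicator (fun _ => b) ω,
    (measurable_const.indicator ht).sub (measurable_const.indicator hs), fun ω => ?_,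
    (Function.support_sub _ _).trans
      (union_subset (support_indicator_subset.trans htA) (support_indicator_subset.trans hsA)),
    ?_, hPs.trans_le (measure_mono fun ω hω => ?_)⟩
  · by_cases hωt : ω ∈ t
    · simp [hωt, disjoint_left.1 hts hωt, abs_of_nonneg ha.1, ha.2]
    · by_cases hωs : ω ∈ s
      · simpa only [hgs ω hωs, abs_neg, abs_of_pos hb.1] using hb.2
      · simp [hωt, hωs, hε.le]
  · rw [integral_sub ((integrable_const a).indicator ht) ((integrable_const b).indicator hs),
      integral_indicator_const _ ht, integral_indicator_const _ hs, smul_eq_mul, smul_eq_mul]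
    ring
  · simp only [Function.mem_support, hgs ω hω, neg_ne_zero]
    exact hb.1.ne'

def budgetSet (P Q : Measure Ω) (X : Ω → ℝ) (c : ℝ) : Set (Ω → ℝ) :=
  {Z | Measurable Z ∧ (∀ᵐ ω ∂P, 0 ≤ Z ω ∧ Z ω ≤ X ω) ∧ ∫ ω, Z ω ∂Q ≤ c}

variable {X : Ω → ℝ} {c : ℝ}

lemma integrable_of_mem_budgetSet [IsFiniteMeasure Q] (hQP : Q ≪ P) {M : ℝ}
    (hXb : ∀ ω, X ω ≤ M) {Z : Ω → ℝ} (hZ : Z ∈ budgetSet P Q X c) : Integrable Z Q := by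
  refine Integrable.of_bound hZ.1.aestronglyMeasurable M ?_
  filter_upwards [hQP.ae_le hZ.2.1] with ω h
  rw [Real.norm_eq_abs, abs_of_nonneg h.1]
  exact h.2.trans (hXb ω)

lemma add_mem_budgetSet_and_sub_mem [IsFiniteMeasure Q] (hQP : Q ≪ P) {M : ℝ}
    (hXb : ∀ ω, X ω ≤ M) {f g : Ω → ℝ} (hf : f ∈ budgetSet P Q X c) (hg : Measurable g)
    (hgi : Integrable g Q) (hgQ : ∫ ω, g ω ∂Q = 0)
    (hgf : ∀ ω, 0 ≤ f ω → f ω ≤ X ω → |g ω| ≤ min (f ω) (X ω - f ω)) :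
    f + g ∈ budgetSet P Q X c ∧ f - g ∈ budgetSet P Q X c := by
  have hfi := integrable_of_mem_budgetSet hQP hXb hf
  obtain ⟨hfm, hfX, hfc⟩ := hf
  have hrange : ∀ᵐ ω ∂P, (0 ≤ f ω + g ω ∧ f ω + g ω ≤ X ω) ∧
      (0 ≤ f ω - g ω ∧ f ω - g ω ≤ X ω) := by
    filter_upwards [hfX] with ω h
    obtain ⟨h₁, h₂⟩ := le_min_iff.1 (hgf ω h.1 h.2)
    have := neg_abs_le (g ω)
    have := le_abs_self (g ω)
    exact ⟨⟨by linarith, by linarith⟩, ⟨by linarith, by linarith⟩⟩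
  refine ⟨⟨hfm.add hg, hrange.mono fun ω h => h.1, ?_⟩,
    ⟨hfm.sub hg, hrange.mono fun ω h => h.2, ?_⟩⟩
  · simpa only [Pi.add_apply, integral_add hfi hgi, hgQ, add_zero] using hfc
  · simpa only [Pi.sub_apply, integral_sub hfi hgi, hgQ, sub_zero] using hfc

theorem ae_eq_zero_or_eq_of_isMaxOn_budgetSet [IsFiniteMeasure P] [IsProbabilityMeasure Q]
    (hatomless : ∀ s : Set Ω, MeasurableSet s → 0 < P s →
      ∃ t, t ⊆ s ∧ MeasurableSet t ∧ 0 < P t ∧ P t < P s)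
    (hQP : Q ≪ P) {v : ℝ → ℝ} (hv_mono : MonotoneOn v (Ici 0))
    (hv_conv : StrictConvexOn ℝ (Ici 0) v) (hXm : Measurable X) {M : ℝ} (hXb : ∀ ω, X ω ≤ M)
    {f : Ω → ℝ} (hf : f ∈ budgetSet P Q X c)
    (hmax : IsMaxOn (fun Z => ∫ ω, v (Z ω) ∂P) (budgetSet P Q X c) f) :
    ∀ᵐ ω ∂P, f ω = 0 ∨ f ω = X ω := by
  have hfX := hf.2.1
  by_contra hbad
  have hinterior : P {ω | 0 < min (f ω) (X ω - f ω)} ≠ 0 := by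
    refine fun h0 => hbad (ae_iff.2 (measure_mono_null_ae ?_ h0))
    filter_upwards [hfX] with ω h hω
    push Not at hω
    exact lt_min (h.1.lt_of_ne' hω.1) (sub_pos.2 (h.2.lt_of_ne hω.2))
  obtain ⟨ε, hε, hPA⟩ := exists_pos_measure_setOf_le hinterior
  have hA : MeasurableSet {ω | ε ≤ min (f ω) (X ω - f ω)} :=
    measurableSet_le measurable_const (hf.1.min (hXm.sub hf.1))
  obtain ⟨g, hgm, hgε, hgA, hgQ, hPg⟩ :=
    exists_integral_eq_zero_of_atomless (Q := Q) hatomless hA hPA hε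
  have hgf : ∀ ω, 0 ≤ f ω → f ω ≤ X ω → |g ω| ≤ min (f ω) (X ω - f ω) := by
    intro ω h₁ h₂
    by_cases hω : ω ∈ Function.support g
    · exact (hgε ω).trans (hgA hω)
    · rw [Function.notMem_support.1 hω, abs_zero]
      exact le_min h₁ (sub_nonneg.2 h₂)
  obtain ⟨hplus, hminus⟩ := add_mem_budgetSet_and_sub_mem hQP hXb hf hgm
    (Integrable.of_bound hgm.aestronglyMeasurable ε (ae_of_all _ hgε)) hgQ hgf
  have hint : ∀ Z ∈ budgetSet P Q X c, Integrable (fun ω => v (Z ω)) P := fun Z hZ =>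
    hv_mono.integrable_comp_of_ae_mem_Icc hZ.1 (hZ.2.1.mono fun ω h => ⟨h.1, h.2.trans (hXb ω)⟩)
  have hi₁ : Integrable (fun ω => v (f ω + g ω)) P := hint _ hplus
  have hi₂ : Integrable (fun ω => v (f ω - g ω)) P := hint _ hminus
  have hi₀ : Integrable (fun ω => 2 * v (f ω)) P := (hint f hf).const_mul 2
  have hlt : ∫ ω, 2 * v (f ω) ∂P < ∫ ω, v (f ω + g ω) + v (f ω - g ω) ∂P := by
    have hle : ∀ᵐ ω ∂P, 2 * v (f ω) ≤ v (f ω + g ω) + v (f ω - g ω) := by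
      filter_upwards [hplus.2.1, hminus.2.1] with ω h₁ h₂
      exact hv_conv.two_mul_le_add_sub h₁.1 h₂.1
    have hi₃ : Integrable (fun ω => v (f ω + g ω) + v (f ω - g ω)) P := hi₁.add hi₂
    rw [← sub_pos, ← integral_sub hi₃ hi₀,
      integral_pos_iff_support_of_nonneg_ae (hle.mono fun ω h => sub_nonneg.2 h) (hi₃.sub hi₀)]
    refine hPg.trans_le (measure_mono_ae ?_)
    filter_upwards [hplus.2.1, hminus.2.1] with ω h₁ h₂ hω
    exact (sub_pos.2 (hv_conv.two_mul_lt_add_sub h₁.1 h₂.1 hω)).ne'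
  have h₁ : ∫ ω, v (f ω + g ω) ∂P ≤ ∫ ω, v (f ω) ∂P := isMaxOn_iff.1 hmax _ hplus
  have h₂ : ∫ ω, v (f ω - g ω) ∂P ≤ ∫ ω, v (f ω) ∂P := isMaxOn_iff.1 hmax _ hminus
  rw [integral_const_mul, integral_add hi₁ hi₂] at hlt
  linarith

end

theorem stmt14_general {Ω : Type*} [MeasurableSpace Ω] (P : Measure Ω) [IsProbabilityMeasure P]
    (hatomless : ∀ s : Set Ω, MeasurableSet s → 0 < P s →
      ∃ t, t ⊆ s ∧ MeasurableSet t ∧ 0 < P t ∧ P t < P s)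
    {n : ℕ} (u : Fin n → ℝ → ℝ)
    (hu_mono : ∀ i, StrictMonoOn (u i) (Ici 0))
    (S : Finset (Fin n)) (hu_conv : ∀ i ∈ S, StrictConvexOn ℝ (Ici 0) (u i))
    (X : Ω → ℝ) (hXm : Measurable X) (M : ℝ) (hXb : ∀ ω, X ω ≤ M)
    (Q : Measure Ω) [IsProbabilityMeasure Q] (hQP : Q ≪ P)
    (ξ : Fin n → Ω → ℝ)
    (Xv : Fin n → Ω → ℝ) (hXvm : ∀ i, Measurable (Xv i))
    (hXvrange : ∀ i, ∀ᵐ ω ∂P, 0 ≤ Xv i ω ∧ Xv i ω ≤ X ω)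
    (hbudget : ∀ i, ∫ ω, Xv i ω ∂Q ≤ ∫ ω, ξ i ω ∂Q)
    (hopt : ∀ i, ∀ Z : Ω → ℝ, Measurable Z → (∀ᵐ ω ∂P, 0 ≤ Z ω ∧ Z ω ≤ X ω) →
      ∫ ω, Z ω ∂Q ≤ ∫ ω, ξ i ω ∂Q → ∫ ω, u i (Z ω) ∂P ≤ ∫ ω, u i (Xv i ω) ∂P)
    (hclear : ∀ᵐ ω ∂P, ∑ i, Xv i ω = X ω) :
    (∀ i ∈ S, ∀ᵐ ω ∂P, Xv i ω * (X ω - Xv i ω) = 0) ∧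
    (∀ i ∈ S, ∀ j ∈ S, i ≠ j → ∀ᵐ ω ∂P, Xv i ω * Xv j ω = 0) ∧
    (∀ i ∈ S, ∀ᵐ ω ∂P, Xv i ω * (X ω - ∑ j ∈ S, Xv j ω) = 0) := by
  have hextreme : ∀ i ∈ S, ∀ᵐ ω ∂P, Xv i ω = 0 ∨ Xv i ω = X ω := fun i hi =>
    ae_eq_zero_or_eq_of_isMaxOn_budgetSet hatomless hQP (hu_mono i).monotoneOn (hu_conv i hi)
      hXm hXb ⟨hXvm i, hXvrange i, hbudget i⟩
      (isMaxOn_iff.2 fun Z hZ => hopt i Z hZ.1 hZ.2.1 hZ.2.2)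
  have hothers : ∀ i ∈ S, ∀ᵐ ω ∂P, Xv i ω = 0 ∨ ∀ j ≠ i, Xv j ω = 0 := by
    intro i hi
    filter_upwards [hextreme i hi, hclear, ae_all_iff.2 hXvrange] with ω h hsum hr
    exact h.imp_right fun hX j hji =>
      Finset.eq_zero_of_eq_sum_of_ne (fun k => (hr k).1) (hX.trans hsum.symm) hji
  refine ⟨fun i hi => ?_, fun i hi j _ hij => ?_, fun i hi => ?_⟩
  · filter_upwards [hextreme i hi] with ω h
    rcases h with h | h <;> simp [h]
  · filter_upwards [hothers i hi] with ω h
    rcases h with h | h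
    · simp [h]
    · simp [h j hij.symm]
  · filter_upwards [hothers i hi, hextreme i hi] with ω h hX
    rcases h with h | h
    · simp [h]
    · rw [Finset.sum_eq_single_of_mem i hi fun j _ hji => h j hji]
      rcases hX with hX | hX <;> simp [hX]

/-- Equilibrium allocations of strictly risk-seeking agents are extreme: on an atomless
space, each strictly risk-seeking agent `i ∈ S` receives either `0` or the entire
aggregate endowment `X` in every state, so `((X_i)_{i∈S}, X − ∑_{i∈S} X_i)` is a jackpot
allocation. -/
theorem stmt14 {Ω : Type*} [MeasurableSpace Ω] (P : Measure Ω) [IsProbabilityMeasure P]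
    (hatomless : ∀ s : Set Ω, MeasurableSet s → 0 < P s →
      ∃ t, t ⊆ s ∧ MeasurableSet t ∧ 0 < P t ∧ P t < P s)
    {n : ℕ} (u : Fin n → ℝ → ℝ)
    (hu_mono : ∀ i, StrictMonoOn (u i) (Ici 0))
    (hu_cont : ∀ i, ContinuousOn (u i) (Ici 0))
    (hu0 : ∀ i, u i 0 = 0)
    (S : Finset (Fin n)) (hu_conv : ∀ i ∈ S, StrictConvexOn ℝ (Ici 0) (u i))
    (X : Ω → ℝ) (hXm : Measurable X) (hX0 : ∀ ω, 0 ≤ X ω) (M : ℝ) (hXb : ∀ ω, X ω ≤ M)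
    (Q : Measure Ω) [IsProbabilityMeasure Q] (hQP : Q ≪ P)
    (ξ : Fin n → Ω → ℝ) (hξm : ∀ i, Measurable (ξ i)) (hξ0 : ∀ i ω, 0 ≤ ξ i ω)
    (hξsum : ∀ ω, ∑ i, ξ i ω = X ω)
    (Xv : Fin n → Ω → ℝ) (hXvm : ∀ i, Measurable (Xv i))
    (hXvrange : ∀ i, ∀ᵐ ω ∂P, 0 ≤ Xv i ω ∧ Xv i ω ≤ X ω)
    (hbudget : ∀ i, ∫ ω, Xv i ω ∂Q ≤ ∫ ω, ξ i ω ∂Q)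
    (hopt : ∀ i, ∀ Z : Ω → ℝ, Measurable Z → (∀ᵐ ω ∂P, 0 ≤ Z ω ∧ Z ω ≤ X ω) →
      ∫ ω, Z ω ∂Q ≤ ∫ ω, ξ i ω ∂Q → ∫ ω, u i (Z ω) ∂P ≤ ∫ ω, u i (Xv i ω) ∂P)
    (hclear : ∀ᵐ ω ∂P, ∑ i, Xv i ω = X ω) :
    (∀ i ∈ S, ∀ᵐ ω ∂P, Xv i ω * (X ω - Xv i ω) = 0) ∧
    (∀ i ∈ S, ∀ j ∈ S, i ≠ j → ∀ᵐ ω ∂P, Xv i ω * Xv j ω = 0) ∧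
    (∀ i ∈ S, ∀ᵐ ω ∂P, Xv i ω * (X ω - ∑ j ∈ S, Xv j ω) = 0) :=
  stmt14_general P hatomless u hu_mono S hu_conv X hXm M hXb Q hQP ξ Xv hXvm hXvrange hbudget hopt
    hclear
end

section
/- Local gambling improvement for cavex RDU with constant endowment: Let u: ℝ₊ → ℝ₊ be strictly increasing and differentiable, and w a weighting function with w(1/n) > 1/n. Fix y > 0 and an event A with P(A) = 1/n. For ε ≥ 0, let Z^ε = (y − ε) + nε·1_A, whose RDU value is g(ε) = u(y − ε) + (u(y + (n−1)ε) − u(y − ε))·w(1/n). Then g'(0) = n·u'(y)·(w(1/n) − 1/n) > 0, so g(ε) > u(y) for all sufficiently small ε > 0; that is, each agent strictly prefers the small counter-monotonic gamble Z^ε to the sure amount y. -/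
/-!
At `ε = 0` the gamble loses `u'(y)` per unit of `ε` on the likely outcome and gains
`(n - 1) u'(y)` on the unlikely one, which the weighting function inflates to `w(1/n) > 1/n`.
So `g'(0) = n u'(y) (w(1/n) - 1/n) > 0`, and a positive derivative at `0` makes `g` exceed
`g(0) = u(y)` just to the right of `0`.
-/

open Set Filter Topology

theorem HasDerivAt.exists_forall_lt_add_of_deriv_pos {f : ℝ → ℝ} {f' x : ℝ}
    (hf : HasDerivAt f f' x) (hf' : 0 < f') :
    ∃ δ > 0, ∀ ε : ℝ, 0 < ε → ε < δ → f x < f (x + ε) := by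
  have hslope : ∀ᶠ t in 𝓝[>] 0, 0 < t⁻¹ * (f (x + t) - f x) :=
    hf.tendsto_slope_zero_right.eventually (lt_mem_nhds hf')
  obtain ⟨δ, hδ, hsub⟩ := mem_nhdsGT_iff_exists_Ioo_subset.mp hslope
  refine ⟨δ, hδ, fun ε hε hεδ => ?_⟩
  have := pos_of_mul_pos_right (hsub ⟨hε, hεδ⟩) (inv_pos.mpr hε).le
  linarith

theorem HasDerivAt.comp_const_add_mul {u : ℝ → ℝ} {u' y : ℝ} (hu : HasDerivAt u u' y) (c : ℝ) :
    HasDerivAt (fun ε => u (y + c * ε)) (c * u') 0 := by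
  have hinner : HasDerivAt (fun ε : ℝ => y + c * ε) c 0 := by
    simpa using ((hasDerivAt_id (0 : ℝ)).const_mul c).const_add y
  rw [mul_comm]
  exact (by simpa using hu : HasDerivAt u u' (y + c * 0)).comp 0 hinner

theorem hasDerivAt_rduValue_gamble {u : ℝ → ℝ} {u' y n W : ℝ} (hu : HasDerivAt u u' y)
    (hn : n ≠ 0) :
    HasDerivAt (fun ε => u (y - ε) + (u (y + (n - 1) * ε) - u (y - ε)) * W)
      (n * u' * (W - 1 / n)) 0 := by
  have hdown : HasDerivAt (fun ε => u (y - ε)) (-u') 0 := by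
    simpa [← sub_eq_add_neg] using hu.comp_const_add_mul (-1)
  have hup := hu.comp_const_add_mul (n - 1)
  have hsum := hdown.add ((hup.sub hdown).mul_const W)
  rwa [show -u' + ((n - 1) * u' - -u') * W = n * u' * (W - 1 / n) by field_simp; ring] at hsum

theorem stmt18_general {n : ℕ} (hn : 2 ≤ n)
    (u u' : ℝ → ℝ)
    (hderiv : ∀ x : ℝ, 0 < x → HasDerivAt u (u' x) x)
    (hu'pos : ∀ x : ℝ, 0 < x → 0 < u' x)
    (w : ℝ → ℝ) (hw : 1 / (n : ℝ) < w (1 / (n : ℝ)))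
    (y : ℝ) (hy : 0 < y)
    (g : ℝ → ℝ)
    (hg : ∀ ε : ℝ, g ε =
      u (y - ε) + (u (y + ((n : ℝ) - 1) * ε) - u (y - ε)) * w (1 / (n : ℝ))) :
    HasDerivAt g ((n : ℝ) * u' y * (w (1 / (n : ℝ)) - 1 / (n : ℝ))) 0 ∧
    0 < (n : ℝ) * u' y * (w (1 / (n : ℝ)) - 1 / (n : ℝ)) ∧
    ∃ δ > 0, ∀ ε : ℝ, 0 < ε → ε < δ → u y < g ε := by
  have hn_pos : (0 : ℝ) < n := by exact_mod_cast (by omega : 0 < n)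
  have hg_deriv : HasDerivAt g ((n : ℝ) * u' y * (w (1 / (n : ℝ)) - 1 / (n : ℝ))) 0 := by
    rw [funext hg]
    exact hasDerivAt_rduValue_gamble (hderiv y hy) hn_pos.ne'
  have hg'_pos : 0 < (n : ℝ) * u' y * (w (1 / (n : ℝ)) - 1 / (n : ℝ)) :=
    mul_pos (mul_pos hn_pos (hu'pos y hy)) (sub_pos.mpr hw)
  obtain ⟨δ, hδ, hlt⟩ := hg_deriv.exists_forall_lt_add_of_deriv_pos hg'_pos
  refine ⟨hg_deriv, hg'_pos, δ, hδ, fun ε hε hεδ => ?_⟩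
  simpa [hg 0] using hlt ε hε hεδ

/-- Local gambling improvement for cavex RDU with constant endowment: with
`g(ε) = u(y−ε) + (u(y+(n−1)ε) − u(y−ε))·w(1/n)` the RDU value of the small gamble
`Z^ε = (y−ε) + nε·1_A` (where `P(A) = 1/n`), one has
`g'(0) = n·u'(y)·(w(1/n) − 1/n) > 0`, so `g(ε) > u(y)` for all small `ε > 0`. -/
theorem stmt18 {n : ℕ} (hn : 2 ≤ n)
    (u u' : ℝ → ℝ) (hu_mono : StrictMonoOn u (Ici 0))
    (hderiv : ∀ x : ℝ, 0 < x → HasDerivAt u (u' x) x)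
    (hu'pos : ∀ x : ℝ, 0 < x → 0 < u' x)
    (w : ℝ → ℝ) (hw : 1 / (n : ℝ) < w (1 / (n : ℝ)))
    (y : ℝ) (hy : 0 < y)
    (g : ℝ → ℝ)
    (hg : ∀ ε : ℝ, g ε =
      u (y - ε) + (u (y + ((n : ℝ) - 1) * ε) - u (y - ε)) * w (1 / (n : ℝ))) :
    HasDerivAt g ((n : ℝ) * u' y * (w (1 / (n : ℝ)) - 1 / (n : ℝ))) 0 ∧
    0 < (n : ℝ) * u' y * (w (1 / (n : ℝ)) - 1 / (n : ℝ)) ∧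
    ∃ δ > 0, ∀ ε : ℝ, 0 < ε → ε < δ → u y < g ε :=
  stmt18_general hn u u' hderiv hu'pos w hw y hy g hg
end

section
/- Equilibrium with no aggregate uncertainty for RDU agents: Let w be a weighting function that agrees with its concave envelope w̄ on [0, β_w] (with w̄ linear on [β_w, 1]), and let the utility be linear on [0, x_0] (normalize u = identity there). Let X = x ∈ (0, x_0] be constant, and let initial endowments (ξ_1,...,ξ_n) be nonnegative random variables summing to x with E[ξ_i] ≤ x·β_w for all i. Then for any jackpot vector J = (1_{A_1},...,1_{A_n}) with E[x·J] = E[ξ] componentwise, the pair (x·J, P) is a competitive equilibrium: for each i and any random variable Y with 0 ≤ Y ≤ x and E[Y] ≤ E[ξ_i], one has ρ_w(Y) ≤ ρ_w(x·1_{A_i}). -/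
open MeasureTheory Set

/-!
With `G t = P(Y > t)`, a variable `0 ≤ Y ≤ x` has `ρ_w(Y) = ∫₀ˣ w(G t) dt` and
`E[Y] = ∫₀ˣ G t dt`. At `p = P(A_i) ≤ β_w` the envelope `w̄` equals `w`, and concavity gives a
supporting line `w̄(p) + c (u - p)` with `c ≥ 0` (as `w̄(p) ≤ w̄(1)`). Integrating
`w(G t) ≤ w̄(p) + c (G t - p)` gives `ρ_w(Y) ≤ x w(p) + c (E[Y] - x p) ≤ x w(p) = ρ_w(x 1_{A_i})`.
The boundary cases are direct: `p = 0` forces `Y = 0` a.s., and `p = 1` only needs `w ≤ 1`.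
-/

theorem ConvexOn.affine_le_of_mem_interior {S : Set ℝ} {f : ℝ → ℝ} (hf : ConvexOn ℝ S f)
    {p y : ℝ} (hp : p ∈ interior S) (hy : y ∈ S) :
    f p + derivWithin f (Ioi p) p * (y - p) ≤ f y := by
  rcases lt_trichotomy y p with hyp | rfl | hpy
  · have h := (hf.slope_le_leftDeriv_of_mem_interior hy hp hyp).trans
      (hf.leftDeriv_le_rightDeriv_of_mem_interior hp)
    rw [slope_def_field, div_le_iff₀ (sub_pos.2 hyp)] at h
    linarith
  · simp
  · have h := hf.rightDeriv_le_slope_of_mem_interior hp hy hpy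
    rw [slope_def_field, le_div_iff₀ (sub_pos.2 hpy)] at h
    linarith

theorem ConcaveOn.exists_le_affine_of_mem_interior {S : Set ℝ} {f : ℝ → ℝ}
    (hf : ConcaveOn ℝ S f) {p : ℝ} (hp : p ∈ interior S) :
    ∃ c, ∀ y ∈ S, f y ≤ f p + c * (y - p) := by
  refine ⟨-derivWithin (-f) (Ioi p) p, fun y hy => ?_⟩
  have h := hf.neg.affine_le_of_mem_interior hp hy
  simp only [Pi.neg_apply] at h
  linarith

section DistortedExpectation

variable {Ω : Type*} [MeasurableSpace Ω] {P : Measure Ω} {w : ℝ → ℝ} {Y : Ω → ℝ} {x : ℝ}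

variable (P w) in
/-- Yaari's dual functional `ρ_w(Y) = ∫₀^∞ w(P(Y > t)) dt`. -/
noncomputable def distortedExpectation (Y : Ω → ℝ) : ℝ :=
  ∫ t in Ioi (0:ℝ), w (P {ω | t < Y ω}).toReal

theorem distortedExpectation_eq_setIntegral_Ioc (hw0 : w 0 = 0) (hYx : ∀ ω, Y ω ≤ x) :
    distortedExpectation P w Y = ∫ t in Ioc 0 x, w (P {ω | t < Y ω}).toReal := by
  refine setIntegral_eq_of_subset_of_forall_sdiff_eq_zero measurableSet_Ioi
    Ioc_subset_Ioi_self fun t ⟨ht0, htx⟩ => ?_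
  have hempty : {ω | t < Y ω} = ∅ :=
    eq_empty_of_forall_notMem fun ω hω => htx ⟨ht0, hω.le.trans (hYx ω)⟩
  rw [hempty, measure_empty, ENNReal.toReal_zero, hw0]

theorem integral_eq_distortedExpectation_id (hYi : Integrable Y P) (hY0 : 0 ≤ᵐ[P] Y) :
    ∫ ω, Y ω ∂P = distortedExpectation P id Y :=
  hYi.integral_eq_integral_meas_lt hY0

theorem distortedExpectation_eq_zero_of_ae_eq_zero (hw0 : w 0 = 0) (hY : Y =ᵐ[P] 0) :
    distortedExpectation P w Y = 0 := by
  refine setIntegral_eq_zero_of_forall_eq_zero fun t (ht : 0 < t) => ?_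
  have hnull : P {ω | t < Y ω} = 0 :=
    measure_mono_null (fun ω (hω : t < Y ω) => (ht.trans hω).ne') (ae_iff.mp hY)
  rw [hnull, ENNReal.toReal_zero, hw0]

theorem distortedExpectation_const_mul_indicator (hw0 : w 0 = 0) (hx : 0 ≤ x) (A : Set Ω) :
    distortedExpectation P w (fun ω => x * A.indicator 1 ω) = x * w (P A).toReal := by
  have hle : ∀ ω, x * A.indicator 1 ω ≤ x := fun ω => by
    by_cases hω : ω ∈ A <;> simp [hω, hx]
  have hlevel : ∀ t ∈ Ioo 0 x, {ω | t < x * A.indicator 1 ω} = A := fun t ⟨ht0, htx⟩ => by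
    ext ω
    by_cases hω : ω ∈ A <;> simp [hω, htx, ht0.le]
  rw [distortedExpectation_eq_setIntegral_Ioc hw0 hle, integral_Ioc_eq_integral_Ioo,
    setIntegral_congr_fun measurableSet_Ioo fun t ht => by rw [hlevel t ht], setIntegral_const]
  simp [hx]

theorem distortedExpectation_le_of_le_affine [IsProbabilityMeasure P]
    (hw_mono : MonotoneOn w (Icc 0 1)) (hw0 : w 0 = 0) {a c : ℝ}
    (haff : ∀ u ∈ Icc (0:ℝ) 1, w u ≤ a + c * u) (hx : 0 ≤ x) (hYm : Measurable Y)
    (hY : ∀ ω, 0 ≤ Y ω ∧ Y ω ≤ x) :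
    distortedExpectation P w Y ≤ x * a + c * ∫ ω, Y ω ∂P := by
  set G : ℝ → ℝ := fun t => (P {ω | t < Y ω}).toReal
  have hG : ∀ t, G t ∈ Icc (0:ℝ) 1 := fun t => ⟨ENNReal.toReal_nonneg, measureReal_le_one⟩
  have hGanti : Antitone G := fun s t hst =>
    ENNReal.toReal_mono (measure_ne_top P _) (measure_mono fun ω hω => hst.trans_lt hω)
  have hwGanti : Antitone (w ∘ G) := fun s t hst => hw_mono (hG t) (hG s) (hGanti hst)
  have hGint : IntegrableOn G (Ioc 0 x) :=
    ((hGanti.antitoneOn _).integrableOn_isCompact isCompact_Icc).mono_set Ioc_subset_Icc_self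
  have hwGint : IntegrableOn (w ∘ G) (Ioc 0 x) :=
    ((hwGanti.antitoneOn _).integrableOn_isCompact isCompact_Icc).mono_set Ioc_subset_Icc_self
  have hYint : Integrable Y P := Integrable.of_bound hYm.aestronglyMeasurable x
    (ae_of_all _ fun ω => by rw [Real.norm_of_nonneg (hY ω).1]; exact (hY ω).2)
  have hlayer : ∫ ω, Y ω ∂P = ∫ t in Ioc 0 x, G t := by
    rw [integral_eq_distortedExpectation_id hYint (ae_of_all _ fun ω => (hY ω).1),
      distortedExpectation_eq_setIntegral_Ioc rfl fun ω => (hY ω).2]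
    rfl
  have hconst : IntegrableOn (fun _ => a) (Ioc 0 x) := integrableOn_const measure_Ioc_lt_top.ne
  calc distortedExpectation P w Y = ∫ t in Ioc 0 x, w (G t) :=
        distortedExpectation_eq_setIntegral_Ioc hw0 fun ω => (hY ω).2
    _ ≤ ∫ t in Ioc 0 x, (a + c * G t) :=
        setIntegral_mono_on hwGint (hconst.add (hGint.const_mul c)) measurableSet_Ioc fun t _ => haff _ (hG t)
    _ = x * a + c * ∫ ω, Y ω ∂P := by
        rw [integral_add hconst (hGint.const_mul c),
          integral_const_mul, setIntegral_const, hlayer]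
        simp [hx]

theorem distortedExpectation_le_mul_of_integral_le [IsProbabilityMeasure P]
    (hw_mono : MonotoneOn w (Icc 0 1)) (hw0 : w 0 = 0) (hw1 : w 1 = 1) {wbar : ℝ → ℝ}
    (hwbar_conc : ConcaveOn ℝ (Icc 0 1) wbar) (hwbar_ge : ∀ u ∈ Icc (0:ℝ) 1, w u ≤ wbar u)
    {p : ℝ} (hp : p ∈ Icc (0:ℝ) 1) (hwbar_p : wbar p = w p) (hx : 0 ≤ x) (hYm : Measurable Y)
    (hY : ∀ ω, 0 ≤ Y ω ∧ Y ω ≤ x) (hEY : ∫ ω, Y ω ∂P ≤ x * p) :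
    distortedExpectation P w Y ≤ x * w p := by
  rcases hp.1.eq_or_lt with rfl | hp0
  · have hYint : Integrable Y P := Integrable.of_mem_Icc 0 x hYm.aemeasurable (ae_of_all _ hY)
    have hY0 : Y =ᵐ[P] 0 := (integral_eq_zero_iff_of_nonneg (fun ω => (hY ω).1) hYint).mp
      (le_antisymm (by simpa using hEY) (integral_nonneg fun ω => (hY ω).1))
    rw [distortedExpectation_eq_zero_of_ae_eq_zero hw0 hY0, hw0, mul_zero]
  rcases hp.2.eq_or_lt with rfl | hp1
  · have hw_le_one : ∀ u ∈ Icc (0:ℝ) 1, w u ≤ 1 + 0 * u := fun u hu => by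
      simpa [hw1] using hw_mono hu (right_mem_Icc.2 zero_le_one) hu.2
    simpa [hw1] using distortedExpectation_le_of_le_affine hw_mono hw0 hw_le_one hx hYm hY
  obtain ⟨c, hc⟩ := hwbar_conc.exists_le_affine_of_mem_interior (p := p)
    (by rw [interior_Icc]; exact ⟨hp0, hp1⟩)
  have hc0 : 0 ≤ c := by
    have hp_le_one : wbar p ≤ wbar 1 := calc
      wbar p = w p := hwbar_p
      _ ≤ w 1 := hw_mono hp (right_mem_Icc.2 zero_le_one) hp.2
      _ ≤ wbar 1 := hwbar_ge 1 (right_mem_Icc.2 zero_le_one)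
    nlinarith [hc 1 (right_mem_Icc.2 zero_le_one)]
  have hw_le_affine : ∀ u ∈ Icc (0:ℝ) 1, w u ≤ (wbar p - c * p) + c * u := fun u hu =>
    (hwbar_ge u hu).trans ((hc u hu).trans_eq (by ring))
  calc distortedExpectation P w Y ≤ x * (wbar p - c * p) + c * ∫ ω, Y ω ∂P :=
        distortedExpectation_le_of_le_affine hw_mono hw0 hw_le_affine hx hYm hY
    _ ≤ x * w p := by rw [← hwbar_p]; nlinarith

end DistortedExpectation

theorem stmt19_general {Ω : Type*} [MeasurableSpace Ω] (P : Measure Ω) [IsProbabilityMeasure P]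
    {n : ℕ}
    (w : ℝ → ℝ) (hw_mono : MonotoneOn w (Icc 0 1)) (hw0 : w 0 = 0) (hw1 : w 1 = 1)
    (βw : ℝ)
    (wbar : ℝ → ℝ) (hwbar_conc : ConcaveOn ℝ (Icc 0 1) wbar)
    (hwbar_ge : ∀ t ∈ Icc (0:ℝ) 1, w t ≤ wbar t)
    (hagree : ∀ t ∈ Icc 0 βw, wbar t = w t)
    (x : ℝ) (hx : 0 < x)
    (ξ : Fin n → Ω → ℝ)
    (hξsmall : ∀ i, ∫ ω, ξ i ω ∂P ≤ x * βw)
    (A : Fin n → Set Ω) (hAm : ∀ i, MeasurableSet (A i))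
    (hmatch : ∀ i, ∫ ω, x * (A i).indicator 1 ω ∂P = ∫ ω, ξ i ω ∂P) :
    ∀ i, ∀ Y : Ω → ℝ, Measurable Y → (∀ ω, 0 ≤ Y ω ∧ Y ω ≤ x) →
      ∫ ω, Y ω ∂P ≤ ∫ ω, ξ i ω ∂P →
      ∫ t in Ioi (0:ℝ), w ((P {ω | t < Y ω}).toReal)
        ≤ ∫ t in Ioi (0:ℝ), w ((P {ω | t < x * (A i).indicator 1 ω}).toReal) := by
  intro i Y hYm hY hYξ
  set p := (P (A i)).toReal
  have hξ_eq : ∫ ω, ξ i ω ∂P = x * p := by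
    rw [← hmatch i, integral_const_mul, integral_indicator_one (hAm i), measureReal_def]
  have hpβ : p ≤ βw := le_of_mul_le_mul_left (hξ_eq ▸ hξsmall i) hx
  change distortedExpectation P w Y
    ≤ distortedExpectation P w (fun ω => x * (A i).indicator 1 ω)
  rw [distortedExpectation_const_mul_indicator hw0 hx.le]
  exact distortedExpectation_le_mul_of_integral_le hw_mono hw0 hw1 hwbar_conc hwbar_ge
    ⟨ENNReal.toReal_nonneg, measureReal_le_one⟩ (hagree p ⟨ENNReal.toReal_nonneg, hpβ⟩) hx.le hYm hY
    (hξ_eq ▸ hYξ)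

/-- Equilibrium with no aggregate uncertainty for RDU agents: with constant total
endowment `x`, linear utility, and a weighting function `w` agreeing with its concave
envelope `w̄` on `[0, β_w]` (with `w̄` linear on `[β_w, 1]`), if each agent's endowment
satisfies `E[ξ_i] ≤ x·β_w`, then any jackpot allocation `x·J` matching the endowment
values is individually optimal at price `P`: every budget-feasible `0 ≤ Y ≤ x` satisfies
`ρ_w(Y) ≤ ρ_w(x·1_{A_i})`. -/
theorem stmt19 {Ω : Type*} [MeasurableSpace Ω] (P : Measure Ω) [IsProbabilityMeasure P]
    {n : ℕ}
    (w : ℝ → ℝ) (hw_mono : MonotoneOn w (Icc 0 1)) (hw0 : w 0 = 0) (hw1 : w 1 = 1)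
    (βw : ℝ) (hβ : βw ∈ Icc (0:ℝ) 1)
    (wbar : ℝ → ℝ) (hwbar_conc : ConcaveOn ℝ (Icc 0 1) wbar)
    (hwbar_ge : ∀ t ∈ Icc (0:ℝ) 1, w t ≤ wbar t)
    (hagree : ∀ t ∈ Icc 0 βw, wbar t = w t)
    (hlin : ∃ a b : ℝ, ∀ t ∈ Icc βw 1, wbar t = a * t + b)
    (x : ℝ) (hx : 0 < x)
    (ξ : Fin n → Ω → ℝ) (hξm : ∀ i, Measurable (ξ i)) (hξ0 : ∀ i ω, 0 ≤ ξ i ω)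
    (hξsum : ∀ ω, ∑ i, ξ i ω = x)
    (hξsmall : ∀ i, ∫ ω, ξ i ω ∂P ≤ x * βw)
    (A : Fin n → Set Ω) (hAm : ∀ i, MeasurableSet (A i))
    (hApart : Pairwise (Function.onFun Disjoint A)) (hAunion : (⋃ i, A i) = univ)
    (hmatch : ∀ i, ∫ ω, x * (A i).indicator 1 ω ∂P = ∫ ω, ξ i ω ∂P) :
    ∀ i, ∀ Y : Ω → ℝ, Measurable Y → (∀ ω, 0 ≤ Y ω ∧ Y ω ≤ x) →
      ∫ ω, Y ω ∂P ≤ ∫ ω, ξ i ω ∂P →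
      ∫ t in Ioi (0:ℝ), w ((P {ω | t < Y ω}).toReal)
        ≤ ∫ t in Ioi (0:ℝ), w ((P {ω | t < x * (A i).indicator 1 ω}).toReal) :=
  stmt19_general P w hw_mono hw0 hw1 βw wbar hwbar_conc hwbar_ge hagree x hx ξ hξsmall A hAm hmatch
end
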